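/- arXiv:1809.09237 — 6 statements merged into one kernel-verified Lean document; each statement's English description precedes it below -/
import Mathlib

section
/- Let α, τ, κ, dist₀, μ₀ be positive real numbers with κ ≥ α, τ > 0, 0 < dist₀ < 2α/τ, and μ₀ ≤ (α²/(2τκ²))·(1 − (max{(τ/α)·dist₀ − 1, 0})²). Define D₀ = max{dist₀, μ₀·max{κ², 2α²}/α}. Then 0 < 1 − (2α/D₀ − τ)·μ₀ + (κ²/D₀²)·μ₀² < 1; in particular ρ̲ = √(1 − (2α/D₀ − τ)μ₀ + (κ²/D₀²)μ₀²) is well defined and satisfies 0 < ρ̲ < 1. -/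
set_option maxHeartbeats 1000000 in
/-- Well-definedness of the smallest admissible geometric decay rate in Theorem 2.4:
the quantity under the square root lies strictly between 0 and 1, hence so does its
square root. -/
theorem stmt1 (α τ κ dist₀ μ₀ : ℝ)
    (hα : 0 < α) (hτ : 0 < τ) (hκpos : 0 < κ) (hd₀pos : 0 < dist₀) (hμ₀pos : 0 < μ₀)
    (hκ : α ≤ κ) (hd₀ : dist₀ < 2 * α / τ)
    (hμ₀ : μ₀ ≤ α ^ 2 / (2 * τ * κ ^ 2) * (1 - (max (τ / α * dist₀ - 1) 0) ^ 2))
    (D₀ : ℝ) (hD₀ : D₀ = max dist₀ (μ₀ * max (κ ^ 2) (2 * α ^ 2) / α)) :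
    (0 < 1 - (2 * α / D₀ - τ) * μ₀ + κ ^ 2 / D₀ ^ 2 * μ₀ ^ 2 ∧
      1 - (2 * α / D₀ - τ) * μ₀ + κ ^ 2 / D₀ ^ 2 * μ₀ ^ 2 < 1) ∧
    (0 < Real.sqrt (1 - (2 * α / D₀ - τ) * μ₀ + κ ^ 2 / D₀ ^ 2 * μ₀ ^ 2) ∧
      Real.sqrt (1 - (2 * α / D₀ - τ) * μ₀ + κ ^ 2 / D₀ ^ 2 * μ₀ ^ 2) < 1) := by
  set M : ℝ := max (κ ^ 2) (2 * α ^ 2) with hM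
  have hαne : α ≠ 0 := ne_of_gt hα
  have hMκ : κ ^ 2 ≤ M := le_max_left _ _
  have hMα : 2 * α ^ 2 ≤ M := le_max_right _ _
  have hM2 : M ≤ 2 * κ ^ 2 := by
    apply max_le
    · nlinarith
    · nlinarith
  have hMpos : 0 < M := lt_of_lt_of_le (by positivity) hMκ
  have hD₀pos : 0 < D₀ := lt_of_lt_of_le hd₀pos (hD₀ ▸ le_max_left _ _)
  -- the weak bound μ₀ ≤ α²/(2τκ²)
  have hm0 : (0:ℝ) ≤ max (τ / α * dist₀ - 1) 0 := le_max_right _ _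
  have hμ₀w : 2 * τ * κ ^ 2 * μ₀ ≤ α ^ 2 := by
    have h1 : μ₀ ≤ α ^ 2 / (2 * τ * κ ^ 2) := by
      have h2 : α ^ 2 / (2 * τ * κ ^ 2) * (1 - (max (τ / α * dist₀ - 1) 0) ^ 2)
          ≤ α ^ 2 / (2 * τ * κ ^ 2) * 1 := by
        apply mul_le_mul_of_nonneg_left _ (by positivity)
        nlinarith [sq_nonneg (max (τ / α * dist₀ - 1) 0)]
      linarith [hμ₀.trans h2, mul_one (α ^ 2 / (2 * τ * κ ^ 2))]
    have hpos : (0:ℝ) < 2 * τ * κ ^ 2 := by positivity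
    calc 2 * τ * κ ^ 2 * μ₀ ≤ 2 * τ * κ ^ 2 * (α ^ 2 / (2 * τ * κ ^ 2)) :=
          mul_le_mul_of_nonneg_left h1 hpos.le
      _ = α ^ 2 := by field_simp
  -- D₀ ≥ 2 α μ₀
  have h2αμ : 2 * α * μ₀ ≤ D₀ := by
    have h1 : μ₀ * M / α ≤ D₀ := hD₀ ▸ le_max_right _ _
    have h2 : 2 * α * μ₀ ≤ μ₀ * M / α := by
      rw [le_div_iff₀ hα]
      nlinarith
    linarith
  -- the key strict inequality
  have hkey : κ ^ 2 * μ₀ < 2 * α * D₀ - τ * D₀ ^ 2 := by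
    rcases max_cases dist₀ (μ₀ * M / α) with ⟨heq, hge⟩ | ⟨heq, hlt⟩
    · -- D₀ = dist₀, with μ₀ M / α ≤ dist₀
      rw [hD₀, heq]
      have hd1 : κ ^ 2 * μ₀ ≤ α * dist₀ := by
        have h1 : μ₀ * M ≤ α * dist₀ := by
          have := (div_le_iff₀ hα).mp hge
          linarith
        nlinarith
      rcases le_total (τ / α * dist₀ - 1) 0 with hle | hge2
      · -- flat region of the max: τ dist₀ ≤ α
        have hτd : τ * dist₀ ≤ α := by
          have h1 : τ / α * dist₀ ≤ 1 := by linarith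
          have h2 := mul_le_mul_of_nonneg_left h1 hα.le
          rw [mul_one] at h2
          calc τ * dist₀ = α * (τ / α * dist₀) := by field_simp
            _ ≤ α := h2
        rcases lt_or_ge (τ * dist₀) α with hlt2 | hge3
        · nlinarith [mul_lt_mul_of_pos_right hlt2 hd₀pos]
        · have heq2 : τ * dist₀ = α := le_antisymm hτd hge3
          nlinarith
      · -- sloped region: the max is τ/α·dist₀ − 1
        rw [max_eq_left hge2] at hμ₀
        have hid : α ^ 2 / (2 * τ * κ ^ 2) * (1 - (τ / α * dist₀ - 1) ^ 2)
            = (2 * α * τ * dist₀ - τ ^ 2 * dist₀ ^ 2) / (2 * τ * κ ^ 2) := by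
          rw [div_mul_eq_mul_div]
          congr 1
          field_simp
          ring
        rw [hid] at hμ₀
        have hμ₀2 : 2 * τ * κ ^ 2 * μ₀ ≤ 2 * α * τ * dist₀ - τ ^ 2 * dist₀ ^ 2 := by
          have hpos : (0:ℝ) < 2 * τ * κ ^ 2 := by positivity
          have := (le_div_iff₀ hpos).mp hμ₀
          linarith
        have hτd2 : τ * dist₀ < 2 * α := by
          have := (lt_div_iff₀ hτ).mp hd₀
          linarith
        nlinarith [mul_pos (mul_pos hτ hd₀pos) (show (0:ℝ) < 2 * α - τ * dist₀ by linarith)]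
    · -- D₀ = μ₀ M / α
      rw [hD₀, heq]
      have e1 : 2 * α * (μ₀ * M / α) - τ * (μ₀ * M / α) ^ 2
          = (2 * α ^ 2 * μ₀ * M - τ * μ₀ ^ 2 * M ^ 2) / α ^ 2 := by
        field_simp
      rw [e1, lt_div_iff₀ (by positivity : (0:ℝ) < α ^ 2)]
      -- need: κ² μ₀ α² < 2 α² μ₀ M − τ μ₀² M²
      have h1 : τ * μ₀ * M ^ 2 * (2 * κ ^ 2) ≤ α ^ 2 * M ^ 2 := by
        nlinarith [sq_nonneg M, mul_le_mul_of_nonneg_right hμ₀w (sq_nonneg M)]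
      nlinarith [mul_nonneg (sub_nonneg.2 hMκ) (sub_nonneg.2 hM2),
        mul_pos (mul_pos (pow_pos hκpos 2) hMpos) (mul_pos hμ₀pos (by positivity : (0:ℝ) < α ^ 2)),
        mul_pos hμ₀pos (by positivity : (0:ℝ) < α ^ 2)]
  -- rewrite the expression over a common denominator
  have hEeq : 1 - (2 * α / D₀ - τ) * μ₀ + κ ^ 2 / D₀ ^ 2 * μ₀ ^ 2
      = (D₀ ^ 2 - (2 * α * D₀ - τ * D₀ ^ 2) * μ₀ + κ ^ 2 * μ₀ ^ 2) / D₀ ^ 2 := by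
    field_simp
  have hN0 : 0 < D₀ ^ 2 - (2 * α * D₀ - τ * D₀ ^ 2) * μ₀ + κ ^ 2 * μ₀ ^ 2 := by
    nlinarith [mul_nonneg hD₀pos.le (sub_nonneg.2 h2αμ),
      mul_pos (mul_pos hτ (pow_pos hD₀pos 2)) hμ₀pos, sq_nonneg (κ * μ₀)]
  have hN1 : D₀ ^ 2 - (2 * α * D₀ - τ * D₀ ^ 2) * μ₀ + κ ^ 2 * μ₀ ^ 2 < D₀ ^ 2 := by
    nlinarith [mul_lt_mul_of_pos_right hkey hμ₀pos]
  have hE0 : 0 < 1 - (2 * α / D₀ - τ) * μ₀ + κ ^ 2 / D₀ ^ 2 * μ₀ ^ 2 := by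
    rw [hEeq]
    exact div_pos hN0 (pow_pos hD₀pos 2)
  have hE1 : 1 - (2 * α / D₀ - τ) * μ₀ + κ ^ 2 / D₀ ^ 2 * μ₀ ^ 2 < 1 := by
    rw [hEeq, div_lt_one (pow_pos hD₀pos 2)]
    exact hN1
  refine ⟨⟨hE0, hE1⟩, Real.sqrt_pos.2 hE0, ?_⟩
  have h := Real.sqrt_lt_sqrt hE0.le hE1
  simpa using h
end

section
/- Let h : ℝⁿ → ℝ, let X ⊆ ℝⁿ be a nonempty closed set of global minimizers of h (h(z) ≤ h(x) for all z ∈ X, x ∈ ℝⁿ, with optimal value h⋆), and let α > 0, τ > 0. Assume h is sharp with parameter α, i.e. h(x) − h⋆ ≥ α·dist(x, X) for all x, and h is weakly convex with parameter τ, i.e. x ↦ h(x) + (τ/2)‖x‖² is convex. Then for every x ∈ ℝⁿ with 0 < dist(x, X) < 2α/τ, there exists w ∈ ℝⁿ such that h(w) + (τ/2)‖w − x‖² < h(x); consequently 0 is not a Fréchet subgradient of h at x, i.e. x is not a critical point of h. -/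
open scoped RealInnerProductSpace

set_option maxHeartbeats 1000000

/-- A sharp and weakly convex function has no critical points, other than the global
minimizers, in the region `dist(x, X) < 2α/τ`. -/
theorem stmt3 {n : ℕ} (h : EuclideanSpace ℝ (Fin n) → ℝ)
    (X : Set (EuclideanSpace ℝ (Fin n))) (hXne : X.Nonempty) (hXcl : IsClosed X)
    (hstar : ℝ)
    (hmin : ∀ z ∈ X, ∀ x : EuclideanSpace ℝ (Fin n), h z ≤ h x)
    (hval : ∀ z ∈ X, h z = hstar)
    (α τ : ℝ) (hα : 0 < α) (hτ : 0 < τ)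
    (hsharp : ∀ x : EuclideanSpace ℝ (Fin n), α * Metric.infDist x X ≤ h x - hstar)
    (hwc : ConvexOn ℝ Set.univ
      (fun x : EuclideanSpace ℝ (Fin n) => h x + τ / 2 * ‖x‖ ^ 2))
    (x : EuclideanSpace ℝ (Fin n))
    (hx0 : 0 < Metric.infDist x X) (hx1 : Metric.infDist x X < 2 * α / τ) :
    (∃ w : EuclideanSpace ℝ (Fin n), h w + τ / 2 * ‖w - x‖ ^ 2 < h x) ∧
      ¬ (0 ≤ Filter.liminf
        (fun y => (h y - h x - ⟪(0 : EuclideanSpace ℝ (Fin n)), y - x⟫) / ‖y - x‖)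
        (nhdsWithin x {x}ᶜ)) := by
  classical
  obtain ⟨z, hzX, hzd⟩ := hXcl.exists_infDist_eq_dist hXne x
  set D : ℝ := ‖z - x‖ with hD
  have hDd : Metric.infDist x X = D := by
    rw [hzd, dist_eq_norm, ← norm_neg]; congr 1; abel
  have hDpos : 0 < D := hDd ▸ hx0
  have hzval : h z = hstar := hval z hzX
  -- key strict inequality
  have hτD : τ * D < 2 * α := by
    have := (lt_div_iff₀ hτ).mp (hDd ▸ hx1)
    linarith
  have hsx := hsharp x
  rw [hDd] at hsx
  have hkey : h z + τ / 2 * D ^ 2 < h x := by nlinarith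
  set c : ℝ := h x - h z - τ / 2 * D ^ 2 with hc
  have hcpos : 0 < c := by simp only [hc]; linarith
  refine ⟨⟨z, hkey⟩, ?_⟩
  -- the quotient function
  set f : EuclideanSpace ℝ (Fin n) → ℝ :=
    fun y => (h y - h x - ⟪(0 : EuclideanSpace ℝ (Fin n)), y - x⟫) / ‖y - x‖ with hf
  have hfeq : ∀ y, f y = (h y - h x) / ‖y - x‖ := by
    intro y; simp [hf, inner_zero_left]
  -- segment bound
  have hseg : ∀ t : ℝ, t ∈ Set.Ioc (0:ℝ) 1 →
      h (x + t • (z - x)) - h x ≤ -(t * c) := by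
    intro t ht
    have hcvx := hwc.2 (Set.mem_univ x) (Set.mem_univ z)
      (show (0:ℝ) ≤ 1 - t by linarith [ht.2]) ht.1.le (by ring : (1 - t) + t = 1)
    simp only at hcvx
    have hyt : (1 - t) • x + t • z = x + t • (z - x) := by
      rw [smul_sub]; module
    rw [hyt] at hcvx
    have hI : ‖x + t • (z - x)‖ ^ 2 = ‖x‖ ^ 2 + 2 * (t * ⟪x, z - x⟫) + t ^ 2 * D ^ 2 := by
      rw [norm_add_sq_real, real_inner_smul_right, norm_smul, Real.norm_eq_abs,
        mul_pow, sq_abs]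
    have hz2 : ‖z‖ ^ 2 = ‖x‖ ^ 2 + 2 * ⟪x, z - x⟫ + D ^ 2 := by
      have hxz : x + (z - x) = z := by abel
      have := norm_add_sq_real x (z - x)
      rw [hxz] at this
      linarith
    rw [hI, hz2] at hcvx
    simp only [smul_eq_mul] at hcvx
    simp only [hc]
    nlinarith [hcvx, mul_nonneg (mul_nonneg hτ.le (sq_nonneg t)) (sq_nonneg D)]
  -- frequently f ≤ -c/D
  have hfreq : ∃ᶠ y in nhdsWithin x {x}ᶜ, f y ≤ -c / D := by
    have htend : Filter.Tendsto (fun t : ℝ => x + t • (z - x)) (nhdsWithin 0 (Set.Ioc 0 1))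
        (nhdsWithin x {x}ᶜ) := by
      rw [tendsto_nhdsWithin_iff]
      constructor
      · have : Filter.Tendsto (fun t : ℝ => x + t • (z - x)) (nhds 0) (nhds (x + (0:ℝ) • (z - x))) := by
          exact Filter.Tendsto.const_add _ ((continuous_id.smul continuous_const).tendsto 0)
        simpa using this.mono_left nhdsWithin_le_nhds
      · filter_upwards [self_mem_nhdsWithin] with t ht
        simp only [Set.mem_compl_iff, Set.mem_singleton_iff]
        intro hcon
        have : t • (z - x) = 0 := by
          have := congrArg (fun w => w - x) hcon
          simpa [add_sub_cancel_left] using this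
        rcases smul_eq_zero.mp this with h1 | h2
        · exact absurd h1 (ne_of_gt ht.1)
        · exact hDpos.ne' (by simpa [hD] using congrArg norm h2)
    have hIoc : ∃ᶠ t in nhdsWithin (0:ℝ) (Set.Ioc 0 1),
        f (x + t • (z - x)) ≤ -c / D := by
      haveI hne : (nhdsWithin (0:ℝ) (Set.Ioc 0 1)).NeBot :=
        left_nhdsWithin_Ioc_neBot one_pos
      apply Filter.Eventually.frequently
      filter_upwards [self_mem_nhdsWithin] with t ht
      have hnorm : ‖(x + t • (z - x)) - x‖ = t * D := by
        rw [add_sub_cancel_left, norm_smul, Real.norm_eq_abs, abs_of_pos ht.1]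
      rw [hfeq, hnorm]
      rw [div_le_div_iff₀ (mul_pos ht.1 hDpos) hDpos]
      have := hseg t ht
      nlinarith [ht.1]
    exact htend.frequently hIoc
  -- bounded below
  have hbdd : Filter.IsBoundedUnder (· ≥ ·) (nhdsWithin x {x}ᶜ) f := by
    obtain ⟨K, t, htmem, hK⟩ := hwc.locallyLipschitz x
    refine ⟨-((K : ℝ) + τ / 2 * (2 * ‖x‖ + 1)), ?_⟩
    have hev : ∀ᶠ y in nhdsWithin x {x}ᶜ,
        -((K : ℝ) + τ / 2 * (2 * ‖x‖ + 1)) ≤ f y := by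
      have hmem : t ∩ Metric.ball x 1 ∈ nhdsWithin x {x}ᶜ :=
        nhdsWithin_le_nhds (Filter.inter_mem htmem (Metric.ball_mem_nhds x one_pos))
      filter_upwards [hmem, self_mem_nhdsWithin] with y hy hyne
      have hyx : y ≠ x := hyne
      have hpos : 0 < ‖y - x‖ := by
        rw [norm_pos_iff, sub_ne_zero]; exact hyx
      have hg : |(h y + τ / 2 * ‖y‖ ^ 2) - (h x + τ / 2 * ‖x‖ ^ 2)| ≤ K * ‖y - x‖ := by
        have := hK.dist_le_mul y hy.1 x (mem_of_mem_nhds htmem)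
        rw [Real.dist_eq, dist_eq_norm] at this
        exact this
      have hynorm : ‖y‖ ≤ ‖x‖ + 1 := by
        have : dist y x < 1 := hy.2
        rw [dist_eq_norm] at this
        calc ‖y‖ = ‖x + (y - x)‖ := by congr 1; abel
        _ ≤ ‖x‖ + ‖y - x‖ := norm_add_le _ _
        _ ≤ ‖x‖ + 1 := by linarith
      have hsq : |‖y‖ ^ 2 - ‖x‖ ^ 2| ≤ (2 * ‖x‖ + 1) * ‖y - x‖ := by
        have h1 : |‖y‖ - ‖x‖| ≤ ‖y - x‖ := abs_norm_sub_norm_le y x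
        have h2 : ‖y‖ ^ 2 - ‖x‖ ^ 2 = (‖y‖ + ‖x‖) * (‖y‖ - ‖x‖) := by ring
        rw [h2, abs_mul]
        have h3 : |‖y‖ + ‖x‖| ≤ 2 * ‖x‖ + 1 := by
          rw [abs_of_nonneg (by positivity)]; linarith
        exact mul_le_mul h3 h1 (abs_nonneg _) (by positivity)
      rw [hfeq, le_div_iff₀ hpos]
      have habs1 : -(K * ‖y - x‖) ≤ (h y + τ / 2 * ‖y‖ ^ 2) - (h x + τ / 2 * ‖x‖ ^ 2) :=
        neg_le_of_abs_le hg
      have habs2 : ‖y‖ ^ 2 - ‖x‖ ^ 2 ≤ (2 * ‖x‖ + 1) * ‖y - x‖ :=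
        (le_abs_self _).trans hsq
      have p1 := mul_le_mul_of_nonneg_left habs2 (show (0:ℝ) ≤ τ / 2 by positivity)
      nlinarith [habs1, p1]
    simpa [Filter.eventually_map] using hev
  have hle : Filter.liminf f (nhdsWithin x {x}ᶜ) ≤ -c / D :=
    Filter.liminf_le_of_frequently_le hfreq hbdd
  intro hcon
  have h2 : 0 < c / D := div_pos hcpos hDpos
  have h3 := hcon.trans hle
  rw [neg_div] at h3
  linarith
end

section
/- Let U⋆, U ∈ ℝ^{n×r} and let σ_r(U⋆) denote the r-th largest (i.e. smallest) singular value of U⋆. Then 2(√2 − 1)·σ_r(U⋆)²·inf_{R ∈ O(r)} ‖U − U⋆R‖_F² ≤ ‖UUᵀ − U⋆U⋆ᵀ‖_F², where O(r) = {R ∈ ℝ^{r×r} : RᵀR = I} is the set of r×r orthogonal matrices. Equivalently, setting X⋆ = U⋆U⋆ᵀ (so σ_r(U⋆)² = σ_r(X⋆), the r-th largest singular value of X⋆) and U = {U⋆R : R ∈ O(r)}, one has 2(√2 − 1)·σ_r(X⋆)·dist²(U, U) ≤ ‖UUᵀ − X⋆‖_F² with dist(U, U) = inf_{R ∈ O(r)}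 ‖U − U⋆R‖_F. -/
open Matrix
open scoped BigOperators

/-- Frobenius norm of a real matrix. -/
noncomputable def frobNorm {α β : Type*} [Fintype α] [Fintype β] (A : Matrix α β ℝ) : ℝ :=
  Real.sqrt (∑ i, ∑ j, (A i j) ^ 2)

/-- Euclidean norm on `β → ℝ`. -/
noncomputable def e2norm {β : Type*} [Fintype β] (v : β → ℝ) : ℝ :=
  Real.sqrt (∑ i, (v i) ^ 2)

/-- The `k`-th largest singular value of a matrix, via the Courant–Fischer
max-min characterization. -/
noncomputable def singularValue {α β : Type*} [Fintype α] [Fintype β]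
    (A : Matrix α β ℝ) (k : ℕ) : ℝ :=
  sSup {t : ℝ | ∃ S : Submodule ℝ (β → ℝ), Module.finrank ℝ S = k ∧
    t = sInf {s : ℝ | ∃ x ∈ S, e2norm x = 1 ∧ s = e2norm (A.mulVec x)}}

/-- Distance from `W` to the orbit `{Wstar R : R ∈ O(r)}` in Frobenius norm. -/
noncomputable def distOrbit {α : Type*} [Fintype α] {r : ℕ}
    (Wstar W : Matrix α (Fin r) ℝ) : ℝ :=
  sInf {t : ℝ | ∃ R : Matrix (Fin r) (Fin r) ℝ, Rᵀ * R = 1 ∧ t = frobNorm (W - Wstar * R)}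

lemma frobNorm_nonneg {α β : Type*} [Fintype α] [Fintype β] (A : Matrix α β ℝ) :
    0 ≤ frobNorm A := Real.sqrt_nonneg _

lemma frobNorm_sq {α β : Type*} [Fintype α] [Fintype β] (A : Matrix α β ℝ) :
    frobNorm A ^ 2 = ∑ i, ∑ j, (A i j) ^ 2 := by
  apply Real.sq_sqrt; positivity

lemma e2norm_nonneg {β : Type*} [Fintype β] (v : β → ℝ) : 0 ≤ e2norm v := Real.sqrt_nonneg _

lemma e2norm_sq {β : Type*} [Fintype β] (v : β → ℝ) : e2norm v ^ 2 = ∑ i, (v i) ^ 2 := by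
  apply Real.sq_sqrt; positivity

lemma e2norm_smul {β : Type*} [Fintype β] (c : ℝ) (v : β → ℝ) :
    e2norm (c • v) = |c| * e2norm v := by
  unfold e2norm
  rw [← Real.sqrt_sq_eq_abs, ← Real.sqrt_mul (sq_nonneg c)]
  congr 1
  rw [Finset.mul_sum]
  exact Finset.sum_congr rfl fun i _ => by simp [mul_pow]

lemma scalar_key {s l k p : ℝ} (hs : 0 ≤ s) (hl : 0 ≤ l) (hp : 0 ≤ p)
    (hkp : s ≤ k + p) (hq : 0 ≤ l - k + p) :
    2 * (Real.sqrt 2 - 1) * s * l ≤ l ^ 2 - 2 * l * k + 2 * k ^ 2 + 2 * l * p := by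
  have h2 : Real.sqrt 2 ^ 2 = 2 := Real.sq_sqrt (by norm_num)
  have h1 : 1 ≤ Real.sqrt 2 := by nlinarith [Real.sqrt_nonneg 2]
  have h32 : Real.sqrt 2 ≤ 3/2 := by nlinarith [Real.sqrt_nonneg 2]
  have e : 0 ≤ l^2 - 2*Real.sqrt 2*s*l + 2*s^2 := by
    have h := sq_nonneg (l - Real.sqrt 2*s)
    have h' : (l - Real.sqrt 2*s)^2 = l^2 - 2*Real.sqrt 2*s*l + Real.sqrt 2^2 * s^2 := by ring
    rw [h', h2] at h; linarith
  rcases le_or_gt s k with hsk | hsk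
  · rcases le_or_gt (k + s) l with hko | hko
    · nlinarith [sq_nonneg (2*k - l), mul_nonneg hl hp, mul_nonneg hl hs]
    · nlinarith [e, mul_nonneg hl hp,
        mul_nonneg (sub_nonneg.2 hsk) (le_of_lt (sub_pos.2 hko))]
  · rcases le_or_gt (k + s) (2*l) with hko | hko
    · nlinarith [e, mul_nonneg (le_of_lt (sub_pos.2 hsk)) (sub_nonneg.2 hko),
        mul_nonneg hl (by linarith : (0:ℝ) ≤ p - (s - k))]
    · have hls : l ≤ s := by linarith
      nlinarith [sq_nonneg (k - l), mul_nonneg hl (sub_nonneg.2 hls),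
        mul_nonneg hl (by linarith : (0:ℝ) ≤ k + p - s), mul_nonneg hl hs]


lemma sv_facts {n r : ℕ} (W : Matrix (Fin n) (Fin r) ℝ) :
    0 ≤ singularValue W r ∧
      ∀ x : Fin r → ℝ, singularValue W r * e2norm x ≤ e2norm (W.mulVec x) := by
  set SS : Set ℝ := {s : ℝ | ∃ x, e2norm x = 1 ∧ s = e2norm (W.mulVec x)} with hSS
  have hsv : singularValue W r = sInf SS := by
    unfold singularValue
    have hone : {t : ℝ | ∃ S : Submodule ℝ (Fin r → ℝ), Module.finrank ℝ S = r ∧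
        t = sInf {s : ℝ | ∃ x ∈ S, e2norm x = 1 ∧ s = e2norm (W.mulVec x)}} = {sInf SS} := by
      ext t
      simp only [Set.mem_setOf_eq, Set.mem_singleton_iff]
      constructor
      · rintro ⟨S, hS, rfl⟩
        have htop : S = ⊤ := by
          apply Submodule.eq_top_of_finrank_eq
          rw [hS]
          simp [Module.finrank_pi]
        subst htop
        congr 1
        ext s
        simp [hSS, Submodule.mem_top]
      · rintro rfl
        refine ⟨⊤, by simp [Module.finrank_pi], ?_⟩
        congr 1
        ext s
        simp [hSS, Submodule.mem_top]
    rw [hone, csSup_singleton]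
  have hbdd : BddBelow SS := ⟨0, fun s hs => by
    obtain ⟨y, _, hy⟩ := hs
    exact hy ▸ e2norm_nonneg _⟩
  constructor
  · rw [hsv]
    apply Real.sInf_nonneg
    intro s hs
    obtain ⟨y, _, hy⟩ := hs
    exact hy ▸ e2norm_nonneg _
  · intro x
    rcases eq_or_ne (e2norm x) 0 with h0 | h0
    · rw [h0, mul_zero]; exact e2norm_nonneg _
    · have hpos : 0 < e2norm x := lt_of_le_of_ne (e2norm_nonneg x) (Ne.symm h0)
      have hcx : e2norm ((e2norm x)⁻¹ • x) = 1 := by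
        rw [e2norm_smul, abs_of_pos (inv_pos.2 hpos)]
        field_simp
      have hmem : e2norm (W.mulVec ((e2norm x)⁻¹ • x)) ∈ SS := ⟨(e2norm x)⁻¹ • x, hcx, rfl⟩
      have hle : sInf SS ≤ e2norm (W.mulVec ((e2norm x)⁻¹ • x)) := csInf_le hbdd hmem
      rw [Matrix.mulVec_smul, e2norm_smul, abs_of_pos (inv_pos.2 hpos)] at hle
      rw [hsv]
      calc sInf SS * e2norm x ≤ ((e2norm x)⁻¹ * e2norm (W.mulVec x)) * e2norm x :=
            mul_le_mul_of_nonneg_right hle hpos.le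
        _ = e2norm (W.mulVec x) := by field_simp

-- continues t5head; entry lemma and dot product lemmas
lemma conj_entry {r : ℕ} (V X : Matrix (Fin r) (Fin r) ℝ) (i : Fin r) :
    (Vᵀ * X * V) i i = (fun a => V a i) ⬝ᵥ (X *ᵥ (fun a => V a i)) := by
  simp only [Matrix.mul_apply, Matrix.transpose_apply, Matrix.mulVec, dotProduct,
    Finset.sum_mul, Finset.mul_sum]
  rw [Finset.sum_comm]
  exact Finset.sum_congr rfl fun a _ => Finset.sum_congr rfl fun b _ => by ring

lemma dot_col_one {r : ℕ} (V : Matrix (Fin r) (Fin r) ℝ) (hV : Vᵀ * V = 1) (i : Fin r) :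
    (fun a => V a i) ⬝ᵥ (fun a => V a i) = 1 := by
  have := congrFun (congrFun hV i) i
  simp only [Matrix.mul_apply, Matrix.transpose_apply, Matrix.one_apply_eq] at this
  simpa [dotProduct] using this

lemma dot_self_nonneg {r : ℕ} (x : Fin r → ℝ) : 0 ≤ x ⬝ᵥ x := by
  simp only [dotProduct]
  exact Finset.sum_nonneg fun i _ => mul_self_nonneg _

lemma gram_nonneg {n r : ℕ} (U : Matrix (Fin n) (Fin r) ℝ) (x : Fin r → ℝ) :
    0 ≤ x ⬝ᵥ ((Uᵀ * U) *ᵥ x) := by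
  rw [← Matrix.mulVec_mulVec, Matrix.dotProduct_mulVec, Matrix.vecMul_transpose]
  exact dot_self_nonneg _

lemma trace_tmul {α β : Type*} [Fintype α] [Fintype β] (A B : Matrix α β ℝ) :
    Matrix.trace (Aᵀ * B) = ∑ i, ∑ j, A i j * B i j := by
  simp only [Matrix.trace, Matrix.diag, Matrix.mul_apply, Matrix.transpose_apply]
  exact Finset.sum_comm

lemma frobNorm_sq_eq_trace {α β : Type*} [Fintype α] [Fintype β] (A : Matrix α β ℝ) :
    frobNorm A ^ 2 = Matrix.trace (Aᵀ * A) := by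
  rw [frobNorm_sq, trace_tmul]
  exact Finset.sum_congr rfl fun i _ => Finset.sum_congr rfl fun j _ => sq (A i j)

-- conjugation invariance of trace
lemma trace_conj {r : ℕ} (V X : Matrix (Fin r) (Fin r) ℝ) (hV : V * Vᵀ = 1) :
    Matrix.trace (Vᵀ * X * V) = Matrix.trace X := by
  rw [Matrix.trace_mul_comm, ← Matrix.mul_assoc, hV, Matrix.one_mul]

lemma trace_conj_mul {r : ℕ} (V X Y : Matrix (Fin r) (Fin r) ℝ) (hV : V * Vᵀ = 1) :
    Matrix.trace ((Vᵀ * X * V) * (Vᵀ * Y * V)) = Matrix.trace (X * Y) := by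
  have h1 : (Vᵀ * X * V) * (Vᵀ * Y * V) = Vᵀ * (X * (V * Vᵀ) * Y) * V := by
    simp only [Matrix.mul_assoc]
  rw [h1, hV, Matrix.mul_one, trace_conj _ _ hV]


-- the master identity
lemma master_identity {n r : ℕ} (A U : Matrix (Fin n) (Fin r) ℝ) :
    Matrix.trace ((U * Uᵀ - A * Aᵀ)ᵀ * (U * Uᵀ - A * Aᵀ)) =
      Matrix.trace ((Uᵀ * U) * (Uᵀ * U)) - 2 * Matrix.trace ((Aᵀ * U)ᵀ * (Aᵀ * U))
        + Matrix.trace ((Aᵀ * A) * (Aᵀ * A)) := by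
  have key : ∀ (B C D E : Matrix (Fin n) (Fin r) ℝ),
      Matrix.trace ((B * Cᵀ) * (D * Eᵀ)) = Matrix.trace ((Eᵀ * B) * (Cᵀ * D)) := by
    intro B C D E
    rw [show (B * Cᵀ) * (D * Eᵀ) = (B * (Cᵀ * D)) * Eᵀ by simp only [Matrix.mul_assoc],
      Matrix.trace_mul_comm, ← Matrix.mul_assoc]
  have hT : (U * Uᵀ - A * Aᵀ)ᵀ = U * Uᵀ - A * Aᵀ := by
    simp [Matrix.transpose_sub, Matrix.transpose_mul]
  rw [hT, Matrix.sub_mul, Matrix.mul_sub, Matrix.mul_sub, Matrix.trace_sub, Matrix.trace_sub,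
    Matrix.trace_sub, key U U U U, key U U A A, key A A U U, key A A A A,
    Matrix.transpose_mul, Matrix.transpose_transpose]
  rw [Matrix.trace_mul_comm (Uᵀ * A) (Aᵀ * U)]
  ring

lemma exists_spectral {r : ℕ} (H : Matrix (Fin r) (Fin r) ℝ) (hH : H.PosSemidef) :
    ∃ (V : Matrix (Fin r) (Fin r) ℝ) (lam : Fin r → ℝ),
      Vᵀ * V = 1 ∧ V * Vᵀ = 1 ∧ Vᵀ * H * V = Matrix.diagonal lam ∧ ∀ i, 0 ≤ lam i := by
  have herm := hH.isHermitian
  refine ⟨(Matrix.IsHermitian.eigenvectorUnitary herm : Matrix (Fin r) (Fin r) ℝ),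
    herm.eigenvalues, ?_, ?_, ?_, fun i => hH.eigenvalues_nonneg i⟩
  · have := Matrix.mem_unitaryGroup_iff'.mp (Matrix.IsHermitian.eigenvectorUnitary herm).2
    simpa [Matrix.star_eq_conjTranspose, Matrix.conjTranspose_eq_transpose_of_trivial] using this
  · have := Matrix.mem_unitaryGroup_iff.mp (Matrix.IsHermitian.eigenvectorUnitary herm).2
    simpa [Matrix.star_eq_conjTranspose, Matrix.conjTranspose_eq_transpose_of_trivial] using this
  · have h := herm.conjStarAlgAut_star_eigenvectorUnitary
    rw [Unitary.conjStarAlgAut_star_apply] at h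
    simp only [Matrix.star_eq_conjTranspose, Matrix.conjTranspose_eq_transpose_of_trivial] at h
    rw [h]
    congr 1


lemma core_ineq {n r : ℕ} (A U : Matrix (Fin n) (Fin r) ℝ) {s : ℝ} (hs : 0 ≤ s)
    (hsym : (Aᵀ * U)ᵀ = Aᵀ * U)
    (hpsd : ∀ x : Fin r → ℝ, 0 ≤ x ⬝ᵥ ((Aᵀ * U) *ᵥ x))
    (hGlb : ∀ x : Fin r → ℝ, s * (x ⬝ᵥ x) ≤ x ⬝ᵥ ((Aᵀ * A) *ᵥ x)) :
    2 * (Real.sqrt 2 - 1) * s * frobNorm (U - A) ^ 2 ≤ frobNorm (U * Uᵀ - A * Aᵀ) ^ 2 := by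
  set Q : Matrix (Fin r) (Fin r) ℝ := Uᵀ * U with hQ
  set P : Matrix (Fin r) (Fin r) ℝ := Aᵀ * U with hP
  set G : Matrix (Fin r) (Fin r) ℝ := Aᵀ * A with hG
  set H : Matrix (Fin r) (Fin r) ℝ := (U - A)ᵀ * (U - A) with hH
  have hHpsd : H.PosSemidef := by
    have := Matrix.posSemidef_conjTranspose_mul_self (U - A)
    rw [Matrix.conjTranspose_eq_transpose_of_trivial] at this; exact this
  obtain ⟨V, lam, hVl, hVr, hdiag, hlam⟩ := exists_spectral H hHpsd
  have hUA : Uᵀ * A = P := by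
    rw [← hsym, hP, Matrix.transpose_mul, Matrix.transpose_transpose]
  have hHrel : H = Q - P - P + G := by
    rw [hH, Matrix.transpose_sub, Matrix.sub_mul, Matrix.mul_sub, Matrix.mul_sub, hUA,
      ← hQ, ← hP, ← hG]
    abel
  set Q' : Matrix (Fin r) (Fin r) ℝ := Vᵀ * Q * V with hQ'
  set P' : Matrix (Fin r) (Fin r) ℝ := Vᵀ * P * V with hP'
  set G' : Matrix (Fin r) (Fin r) ℝ := Vᵀ * G * V with hG'
  have hrel : Matrix.diagonal lam = Q' - P' - P' + G' := by
    rw [← hdiag, hHrel, hQ', hP', hG']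
    simp only [Matrix.sub_mul, Matrix.mul_sub, Matrix.add_mul, Matrix.mul_add, Matrix.mul_assoc]
  have hent : ∀ i j, Matrix.diagonal lam i j = Q' i j - 2 * P' i j + G' i j := by
    intro i j
    have h := congrFun (congrFun hrel i) j
    simp only [Matrix.sub_apply, Matrix.add_apply] at h
    linarith [h]
  have hQsym : Q'ᵀ = Q' := by
    simp [hQ', hQ, Matrix.transpose_mul, Matrix.mul_assoc]
  have hGsym : G'ᵀ = G' := by
    simp [hG', hG, Matrix.transpose_mul, Matrix.mul_assoc]
  have hRHS : frobNorm (U * Uᵀ - A * Aᵀ) ^ 2 =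
      ∑ i, ∑ j, (Q' i j ^ 2 - 2 * P' i j ^ 2 + G' i j ^ 2) := by
    rw [frobNorm_sq_eq_trace, master_identity]
    simp only [← hQ, ← hP, ← hG]
    rw [← trace_conj_mul V Q Q hVr, ← trace_conj_mul V Pᵀ P hVr, ← trace_conj_mul V G G hVr]
    have hPt : Vᵀ * Pᵀ * V = P'ᵀ := by
      simp [hP', Matrix.transpose_mul, Matrix.mul_assoc]
    rw [hPt]
    simp only [← hQ', ← hP', ← hG']
    have tQ : (Q' * Q').trace = ∑ i, ∑ j, Q' i j * Q' i j := by
      nth_rewrite 1 [← hQsym]; exact trace_tmul Q' Q'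
    have tG : (G' * G').trace = ∑ i, ∑ j, G' i j * G' i j := by
      nth_rewrite 1 [← hGsym]; exact trace_tmul G' G'
    rw [tQ, tG, trace_tmul]
    rw [Finset.mul_sum, ← Finset.sum_sub_distrib, ← Finset.sum_add_distrib]
    refine Finset.sum_congr rfl fun i _ => ?_
    rw [Finset.mul_sum, ← Finset.sum_sub_distrib, ← Finset.sum_add_distrib]
    refine Finset.sum_congr rfl fun j _ => by ring
  have hLHS : 2 * (Real.sqrt 2 - 1) * s * frobNorm (U - A) ^ 2 =
      ∑ i, 2 * (Real.sqrt 2 - 1) * s * lam i := by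
    rw [frobNorm_sq_eq_trace, ← hH, ← trace_conj V H hVr, hdiag, Matrix.trace_diagonal,
      Finset.mul_sum]
  rw [hLHS, hRHS]
  have h1 : (1:ℝ) ≤ Real.sqrt 2 := by
    nlinarith [Real.sq_sqrt (show (0:ℝ) ≤ 2 by norm_num), Real.sqrt_nonneg 2]
  refine Finset.sum_le_sum fun i _ => ?_
  have hq0 : 0 ≤ Q' i i := by rw [hQ', hQ, conj_entry]; exact gram_nonneg U _
  have hp0 : 0 ≤ P' i i := by rw [hP', hP, conj_entry]; exact hpsd _
  have hg0 : s ≤ G' i i := by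
    have h := hGlb (fun a => V a i)
    rw [dot_col_one V hVl i, mul_one] at h
    rw [hG', hG, conj_entry]; exact h
  have hli : 0 ≤ lam i := hlam i
  have hdi : lam i = Q' i i - 2 * P' i i + G' i i := by
    have h := hent i i
    simpa [Matrix.diagonal_apply_eq] using h
  have hdiagterm : 2 * (Real.sqrt 2 - 1) * s * lam i ≤
      Q' i i ^ 2 - 2 * P' i i ^ 2 + G' i i ^ 2 := by
    have key := scalar_key (s := s) (l := lam i) (k := G' i i - P' i i) (p := P' i i)
      hs hli hp0 (by linarith) (by linarith [hq0, hdi])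
    calc 2 * (Real.sqrt 2 - 1) * s * lam i
        ≤ lam i ^ 2 - 2 * lam i * (G' i i - P' i i) + 2 * (G' i i - P' i i) ^ 2
            + 2 * lam i * P' i i := key
      _ = Q' i i ^ 2 - 2 * P' i i ^ 2 + G' i i ^ 2 := by rw [hdi]; ring
  have hoff : ∀ j, j ≠ i → 0 ≤ Q' i j ^ 2 - 2 * P' i j ^ 2 + G' i j ^ 2 := by
    intro j hj
    have h := hent i j
    rw [Matrix.diagonal_apply_ne' _ hj] at h
    have h2 : P' i j = (Q' i j + G' i j) / 2 := by linarith
    rw [h2]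
    nlinarith [sq_nonneg (Q' i j - G' i j)]
  calc 2 * (Real.sqrt 2 - 1) * s * lam i
      ≤ Q' i i ^ 2 - 2 * P' i i ^ 2 + G' i i ^ 2 := hdiagterm
    _ ≤ ∑ j, (Q' i j ^ 2 - 2 * P' i j ^ 2 + G' i j ^ 2) := by
        refine Finset.single_le_sum (f := fun j => Q' i j ^ 2 - 2 * P' i j ^ 2 + G' i j ^ 2)
          ?_ (Finset.mem_univ i)
        intro j _
        rcases eq_or_ne j i with rfl | hj
        · refine le_trans ?_ hdiagterm
          have : (0:ℝ) ≤ 2 * (Real.sqrt 2 - 1) * s := by nlinarith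
          exact mul_nonneg this hli
        · exact hoff j hj

-- Householder toolkit (normalization: x ⬝ᵥ x = 2)
lemma vecMulVec_mul_vecMulVec {r : ℕ} (u v w z : Fin r → ℝ) :
    Matrix.vecMulVec u v * Matrix.vecMulVec w z = (v ⬝ᵥ w) • Matrix.vecMulVec u z := by
  ext a b
  simp only [Matrix.mul_apply, Matrix.vecMulVec_apply, Matrix.smul_apply, dotProduct,
    smul_eq_mul, Finset.sum_mul, Finset.mul_sum]
  exact Finset.sum_congr rfl fun c _ => by ring

lemma trace_vecMulVec_mul {r : ℕ} (x y : Fin r → ℝ) (C : Matrix (Fin r) (Fin r) ℝ) :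
    Matrix.trace (Matrix.vecMulVec x y * C) = y ⬝ᵥ (C *ᵥ x) := by
  simp only [Matrix.trace, Matrix.diag, Matrix.mul_apply, Matrix.vecMulVec_apply,
    dotProduct, Matrix.mulVec, Finset.mul_sum]
  rw [Finset.sum_comm]
  exact Finset.sum_congr rfl fun a _ => Finset.sum_congr rfl fun b _ => by ring

/-- Householder reflection, for `x` with `x ⬝ᵥ x = 2`. -/
noncomputable def Hh {r : ℕ} (x : Fin r → ℝ) : Matrix (Fin r) (Fin r) ℝ :=
  1 - Matrix.vecMulVec x x

lemma Hh_symm {r : ℕ} (x : Fin r → ℝ) : (Hh x)ᵀ = Hh x := by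
  unfold Hh
  have hvt : (Matrix.vecMulVec x x)ᵀ = Matrix.vecMulVec x x := by
    ext a b; simp [Matrix.vecMulVec_apply, mul_comm]
  simp [Matrix.transpose_sub, hvt]

lemma Hh_orth {r : ℕ} (x : Fin r → ℝ) (hx : x ⬝ᵥ x = 2) : (Hh x)ᵀ * Hh x = 1 := by
  rw [Hh_symm x]
  unfold Hh
  have key : Matrix.vecMulVec x x * Matrix.vecMulVec x x =
      Matrix.vecMulVec x x + Matrix.vecMulVec x x := by
    rw [vecMulVec_mul_vecMulVec, hx, two_smul]
  have expand : (1 - Matrix.vecMulVec x x) * (1 - Matrix.vecMulVec x x) =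
      1 - Matrix.vecMulVec x x - Matrix.vecMulVec x x
        + Matrix.vecMulVec x x * Matrix.vecMulVec x x := by
    noncomm_ring
  rw [expand, key]
  abel

lemma trace_Hh_mul {r : ℕ} (x : Fin r → ℝ) (C : Matrix (Fin r) (Fin r) ℝ) :
    Matrix.trace ((Hh x)ᵀ * C) = Matrix.trace C - x ⬝ᵥ (C *ᵥ x) := by
  rw [Hh_symm x]
  unfold Hh
  rw [Matrix.sub_mul, Matrix.one_mul, Matrix.trace_sub, trace_vecMulVec_mul]

lemma trace_HhHh_mul {r : ℕ} (u v : Fin r → ℝ) (C : Matrix (Fin r) (Fin r) ℝ) :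
    Matrix.trace ((Hh u * Hh v)ᵀ * C) =
      Matrix.trace C - u ⬝ᵥ (C *ᵥ u) - v ⬝ᵥ (C *ᵥ v) + (v ⬝ᵥ u) * (u ⬝ᵥ (C *ᵥ v)) := by
  rw [Matrix.transpose_mul, Hh_symm u, Hh_symm v]
  unfold Hh
  rw [Matrix.mul_assoc]
  have expand : (1 - Matrix.vecMulVec v v) * ((1 - Matrix.vecMulVec u u) * C) =
      C - Matrix.vecMulVec u u * C - Matrix.vecMulVec v v * C
        + Matrix.vecMulVec v v * (Matrix.vecMulVec u u * C) := by
    noncomm_ring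
  rw [expand, Matrix.trace_add, Matrix.trace_sub, Matrix.trace_sub,
    trace_vecMulVec_mul, trace_vecMulVec_mul, ← Matrix.mul_assoc,
    vecMulVec_mul_vecMulVec, Matrix.smul_mul, Matrix.trace_smul, trace_vecMulVec_mul,
    smul_eq_mul]

lemma Hh_mul_orth {r : ℕ} (u v : Fin r → ℝ) (hu : u ⬝ᵥ u = 2) (hv : v ⬝ᵥ v = 2) :
    (Hh u * Hh v)ᵀ * (Hh u * Hh v) = 1 := by
  rw [Matrix.transpose_mul]
  calc (Hh v)ᵀ * (Hh u)ᵀ * (Hh u * Hh v) = (Hh v)ᵀ * ((Hh u)ᵀ * Hh u) * Hh v := by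
        simp only [Matrix.mul_assoc]
    _ = 1 := by rw [Hh_orth u hu, Matrix.mul_one, Hh_orth v hv]

lemma exists_max_orth {n r : ℕ} (W U : Matrix (Fin n) (Fin r) ℝ) :
    ∃ R₀ : Matrix (Fin r) (Fin r) ℝ, R₀ᵀ * R₀ = 1 ∧
      ∀ S : Matrix (Fin r) (Fin r) ℝ, Sᵀ * S = 1 →
        Matrix.trace (Sᵀ * (R₀ᵀ * (Wᵀ * U))) ≤ Matrix.trace (R₀ᵀ * (Wᵀ * U)) := by
  set K : Set (Matrix (Fin r) (Fin r) ℝ) := {R | Rᵀ * R = 1} with hK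
  have hKclosed : IsClosed K := by
    have hf : Continuous fun R : Matrix (Fin r) (Fin r) ℝ => Rᵀ * R :=
      (continuous_id.matrix_transpose).matrix_mul continuous_id
    exact (isClosed_singleton (x := (1 : Matrix (Fin r) (Fin r) ℝ))).preimage hf
  have hKsub : K ⊆ Set.pi Set.univ fun _ : Fin r =>
      Set.pi Set.univ fun _ : Fin r => Set.Icc (-1 : ℝ) 1 := by
    intro R hR
    intro i _
    intro j _
    have hdiag : ∑ c, R c j * R c j = 1 := by
      have h := congrFun (congrFun hR j) j
      simpa [Matrix.mul_apply, Matrix.transpose_apply, Matrix.one_apply] using h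
    have hsq : R i j ^ 2 ≤ 1 := by
      have h1 : R i j * R i j ≤ ∑ c, R c j * R c j :=
        Finset.single_le_sum (f := fun c => R c j * R c j)
          (fun c _ => mul_self_nonneg _) (Finset.mem_univ i)
      nlinarith [h1, hdiag]
    constructor
    · nlinarith [hsq]
    · nlinarith [hsq]
  have hbox : IsCompact (Set.pi Set.univ fun _ : Fin r =>
      Set.pi Set.univ fun _ : Fin r => Set.Icc (-1 : ℝ) 1) :=
    isCompact_univ_pi fun _ => isCompact_univ_pi fun _ => isCompact_Icc
  have hKcomp : IsCompact K := hbox.of_isClosed_subset hKclosed hKsub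
  have hKne : K.Nonempty := ⟨1, by simp [hK]⟩
  have hfc : Continuous fun R : Matrix (Fin r) (Fin r) ℝ => Matrix.trace (Rᵀ * (Wᵀ * U)) :=
    ((continuous_id.matrix_transpose).matrix_mul continuous_const).matrix_trace
  obtain ⟨R₀, hR₀K, hmax⟩ := hKcomp.exists_isMaxOn hKne hfc.continuousOn
  refine ⟨R₀, hR₀K, ?_⟩
  intro S hS
  have hRS : R₀ * S ∈ K := by
    show (R₀ * S)ᵀ * (R₀ * S) = 1
    rw [Matrix.transpose_mul]
    calc Sᵀ * R₀ᵀ * (R₀ * S) = Sᵀ * (R₀ᵀ * R₀) * S := by simp only [Matrix.mul_assoc]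
      _ = 1 := by rw [hR₀K, Matrix.mul_one, hS]
  have h := hmax hRS
  simp only [Set.mem_setOf_eq] at h
  calc Matrix.trace (Sᵀ * (R₀ᵀ * (Wᵀ * U))) = Matrix.trace ((R₀ * S)ᵀ * (Wᵀ * U)) := by
        rw [Matrix.transpose_mul, Matrix.mul_assoc]
    _ ≤ Matrix.trace (R₀ᵀ * (Wᵀ * U)) := h

lemma dot_smul_lemma {r : ℕ} (C : Matrix (Fin r) (Fin r) ℝ) (c : ℝ) (x : Fin r → ℝ) :
    (c • x) ⬝ᵥ (C *ᵥ (c • x)) = c ^ 2 * (x ⬝ᵥ (C *ᵥ x)) := by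
  rw [Matrix.mulVec_smul, smul_dotProduct, dotProduct_smul]
  simp only [smul_eq_mul]; ring

lemma dot_eq_zero_self {r : ℕ} {x : Fin r → ℝ} (h : x ⬝ᵥ x = 0) : x = 0 := by
  funext i
  have h1 : ∀ c ∈ Finset.univ, (0:ℝ) ≤ x c * x c := fun c _ => mul_self_nonneg _
  have := (Finset.sum_eq_zero_iff_of_nonneg h1).1 h i (Finset.mem_univ i)
  simpa [mul_self_eq_zero] using this

lemma single_dot_single_same {r : ℕ} (i : Fin r) :
    (Pi.single i (1:ℝ) : Fin r → ℝ) ⬝ᵥ (Pi.single i (1:ℝ) : Fin r → ℝ) = 1 := by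
  rw [single_dotProduct, one_mul]; simp

lemma single_dot_single_ne {r : ℕ} {i j : Fin r} (h : i ≠ j) :
    (Pi.single i (1:ℝ) : Fin r → ℝ) ⬝ᵥ (Pi.single j (1:ℝ) : Fin r → ℝ) = 0 := by
  rw [single_dotProduct, one_mul]; exact Pi.single_eq_of_ne h 1

lemma single_dot_mulVec {r : ℕ} (C : Matrix (Fin r) (Fin r) ℝ) (i j : Fin r) :
    (Pi.single i (1:ℝ) : Fin r → ℝ) ⬝ᵥ (C *ᵥ (Pi.single j (1:ℝ) : Fin r → ℝ)) = C i j := by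
  rw [Matrix.mulVec_single_one, single_dotProduct]
  simp

lemma exists_procrustes {n r : ℕ} (W U : Matrix (Fin n) (Fin r) ℝ) :
    ∃ R : Matrix (Fin r) (Fin r) ℝ, Rᵀ * R = 1 ∧
      ((W * R)ᵀ * U)ᵀ = (W * R)ᵀ * U ∧
      ∀ x : Fin r → ℝ, 0 ≤ x ⬝ᵥ (((W * R)ᵀ * U) *ᵥ x) := by
  obtain ⟨R₀, hR₀, hmax⟩ := exists_max_orth W U
  set C : Matrix (Fin r) (Fin r) ℝ := R₀ᵀ * (Wᵀ * U) with hC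
  have hCW : (W * R₀)ᵀ * U = C := by rw [Matrix.transpose_mul, Matrix.mul_assoc]
  -- PSD part via Householder reflections
  have hPSD : ∀ x : Fin r → ℝ, 0 ≤ x ⬝ᵥ (C *ᵥ x) := by
    intro x
    rcases eq_or_ne (x ⬝ᵥ x) 0 with h0 | h0
    · rw [dot_eq_zero_self h0]
      simp
    · have hxx : 0 < x ⬝ᵥ x := by
        rcases lt_or_gt_of_ne h0 with h | h
        · exact absurd h (not_lt.2 (by
            simp only [dotProduct]
            exact Finset.sum_nonneg fun i _ => mul_self_nonneg _))
        · exact h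
      set c : ℝ := Real.sqrt (2 / (x ⬝ᵥ x)) with hc
      have hc2 : c ^ 2 = 2 / (x ⬝ᵥ x) := Real.sq_sqrt (by positivity)
      have hy : (c • x) ⬝ᵥ (c • x) = 2 := by
        rw [smul_dotProduct, dotProduct_smul, smul_eq_mul, smul_eq_mul, ← mul_assoc,
          ← pow_two, hc2]
        field_simp
      have hkey := hmax (Hh (c • x)) (Hh_orth _ hy)
      rw [trace_Hh_mul] at hkey
      have h1 : 0 ≤ (c • x) ⬝ᵥ (C *ᵥ (c • x)) := by linarith
      rw [dot_smul_lemma, hc2] at h1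
      have h2 : 0 < 2 / (x ⬝ᵥ x) := by positivity
      nlinarith [h1, h2]
  -- symmetry part via products of two reflections
  have hsymC : Cᵀ = C := by
    ext i j
    rw [Matrix.transpose_apply]
    rcases eq_or_ne i j with rfl | hij
    · rfl
    have hsq2 : Real.sqrt 2 ^ 2 = 2 := Real.sq_sqrt (by norm_num)
    have hE : ∀ θ : ℝ, 0 ≤ 2 * Real.sin θ ^ 2 * (C j j + C i i) +
        2 * Real.cos θ * Real.sin θ * (C i j - C j i) := by
      intro θ
      set u : Fin r → ℝ := Real.sqrt 2 • (Pi.single j (1:ℝ) : Fin r → ℝ) with hu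
      set v : Fin r → ℝ := (Real.sqrt 2 * Real.cos θ) • (Pi.single j (1:ℝ) : Fin r → ℝ) +
        (Real.sqrt 2 * Real.sin θ) • (Pi.single i (1:ℝ) : Fin r → ℝ) with hv
      have huu : u ⬝ᵥ u = 2 := by
        rw [hu]
        simp only [smul_dotProduct, dotProduct_smul, single_dot_single_same, smul_eq_mul]
        linear_combination hsq2
      have hvv : v ⬝ᵥ v = 2 := by
        rw [hv]
        simp only [add_dotProduct, dotProduct_add, smul_dotProduct,
          dotProduct_smul, single_dot_single_same, single_dot_single_ne hij,
          single_dot_single_ne hij.symm, smul_eq_mul]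
        linear_combination (Real.cos θ ^ 2 + Real.sin θ ^ 2) * hsq2 +
          2 * Real.sin_sq_add_cos_sq θ
      have hkey := hmax (Hh u * Hh v) (Hh_mul_orth u v huu hvv)
      rw [trace_HhHh_mul] at hkey
      have h1 : 0 ≤ u ⬝ᵥ (C *ᵥ u) + v ⬝ᵥ (C *ᵥ v) - (v ⬝ᵥ u) * (u ⬝ᵥ (C *ᵥ v)) := by
        linarith
      have e1 : u ⬝ᵥ (C *ᵥ u) = 2 * C j j := by
        rw [hu, Matrix.mulVec_smul, smul_dotProduct, dotProduct_smul,
          single_dot_mulVec]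
        simp only [smul_eq_mul]
        linear_combination (C j j) * hsq2
      have e2 : v ⬝ᵥ (C *ᵥ v) = 2 * (Real.cos θ ^ 2 * C j j
          + Real.cos θ * Real.sin θ * (C j i + C i j) + Real.sin θ ^ 2 * C i i) := by
        rw [hv]
        simp only [Matrix.mulVec_add, Matrix.mulVec_smul, add_dotProduct,
          dotProduct_add, smul_dotProduct, dotProduct_smul,
          single_dot_mulVec, smul_eq_mul]
        linear_combination (Real.cos θ ^ 2 * C j j + Real.cos θ * Real.sin θ * (C j i + C i j)
          + Real.sin θ ^ 2 * C i i) * hsq2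
      have e3 : v ⬝ᵥ u = 2 * Real.cos θ := by
        rw [hu, hv]
        simp only [add_dotProduct, smul_dotProduct, dotProduct_smul,
          single_dot_single_same, single_dot_single_ne hij, single_dot_single_ne hij.symm,
          smul_eq_mul]
        linear_combination (Real.cos θ) * hsq2
      have e4 : u ⬝ᵥ (C *ᵥ v) = 2 * (Real.cos θ * C j j + Real.sin θ * C j i) := by
        rw [hu, hv]
        simp only [Matrix.mulVec_add, Matrix.mulVec_smul, smul_dotProduct,
          dotProduct_add, dotProduct_smul, single_dot_mulVec, smul_eq_mul]
        linear_combination (Real.cos θ * C j j + Real.sin θ * C j i) * hsq2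
      rw [e1, e2, e3, e4] at h1
      have hpy := Real.sin_sq_add_cos_sq θ
      have hfin : 2 * Real.sin θ ^ 2 * (C j j + C i i) +
          2 * Real.cos θ * Real.sin θ * (C i j - C j i)
          = 2 * C j j + 2 * (Real.cos θ ^ 2 * C j j
            + Real.cos θ * Real.sin θ * (C j i + C i j) + Real.sin θ ^ 2 * C i i)
            - (2 * Real.cos θ) * (2 * (Real.cos θ * C j j + Real.sin θ * C j i)) := by
        linear_combination (2 * C j j) * hpy
      linarith [h1, hfin.ge, hfin.le]
    have ha : 0 ≤ C j j + C i i := by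
      have := hE (Real.pi / 2)
      simpa [Real.sin_pi_div_two, Real.cos_pi_div_two] using this
    by_contra hne
    have hb : C i j - C j i ≠ 0 := fun h => hne (by linarith [sub_eq_zero.1 h])
    set b : ℝ := C i j - C j i with hbdef
    set a : ℝ := C j j + C i i with hadef
    have hbpos : 0 < |b| := abs_pos.2 hb
    set ε : ℝ := min (|b| / (2 * a + 1)) (1/2) with hε
    have hεpos : 0 < ε := lt_min (by positivity) (by norm_num)
    have hεhalf : ε ≤ 1/2 := min_le_right _ _
    have hεb : ε * (2 * a + 1) ≤ |b| := by
      have h1 : ε ≤ |b| / (2 * a + 1) := min_le_left _ _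
      have h2 : (0:ℝ) < 2 * a + 1 := by linarith
      calc ε * (2 * a + 1) ≤ (|b| / (2 * a + 1)) * (2 * a + 1) :=
            mul_le_mul_of_nonneg_right h1 h2.le
        _ = |b| := by field_simp
    set s0 : ℝ := if 0 < b then -ε else ε with hs0
    have hs0abs : s0 ^ 2 = ε ^ 2 := by
      rcases lt_or_ge 0 b with h | h
      · rw [hs0, if_pos h]; ring
      · rw [hs0, if_neg (not_lt.2 h)]
    have hs0b : s0 * b = -(ε * |b|) := by
      rcases lt_or_ge 0 b with h | h
      · rw [hs0, if_pos h, abs_of_pos h]; ring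
      · rw [hs0, if_neg (not_lt.2 h), abs_of_nonpos h]; ring
    have hs0le : -1 ≤ s0 ∧ s0 ≤ 1 := by
      rcases lt_or_ge 0 b with h | h
      · rw [hs0, if_pos h]; constructor <;> linarith
      · rw [hs0, if_neg (not_lt.2 h)]; constructor <;> linarith
    have hsin : Real.sin (Real.arcsin s0) = s0 := Real.sin_arcsin hs0le.1 hs0le.2
    have hcos : Real.cos (Real.arcsin s0) = Real.sqrt (1 - s0 ^ 2) := Real.cos_arcsin s0
    have hcoshalf : 1/2 ≤ Real.cos (Real.arcsin s0) := by
      rw [hcos]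
      have h34 : (1/4:ℝ) ≤ 1 - s0 ^ 2 := by rw [hs0abs]; nlinarith [hεhalf, hεpos]
      calc (1/2 : ℝ) = Real.sqrt (1/4) := by
            rw [show (1/4 : ℝ) = (1/2)^2 by norm_num, Real.sqrt_sq (by norm_num)]
        _ ≤ Real.sqrt (1 - s0 ^ 2) := Real.sqrt_le_sqrt (by linarith)
    have hEθ := hE (Real.arcsin s0)
    rw [hsin, hs0abs] at hEθ
    have hccneg : 2 * Real.cos (Real.arcsin s0) * s0 * b ≤ -(ε * |b|) := by
      have hh := mul_le_mul_of_nonneg_right hcoshalf (le_of_lt (mul_pos hεpos hbpos))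
      calc 2 * Real.cos (Real.arcsin s0) * s0 * b
          = -(2 * (Real.cos (Real.arcsin s0) * (ε * |b|))) := by
            linear_combination (2 * Real.cos (Real.arcsin s0)) * hs0b
        _ ≤ -(2 * ((1/2) * (ε * |b|))) := by linarith [hh]
        _ = -(ε * |b|) := by ring
    nlinarith [hEθ, hccneg, mul_le_mul_of_nonneg_left hεb hεpos.le,
      mul_pos hεpos hεpos]
  exact ⟨R₀, hR₀, by rw [hCW, hsymC], by rw [hCW]; exact hPSD⟩

lemma dot_eq_e2norm_sq {r : ℕ} (y : Fin r → ℝ) : y ⬝ᵥ y = e2norm y ^ 2 := by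
  rw [e2norm_sq]
  exact Finset.sum_congr rfl fun i _ => (sq (y i)).symm

/-- Lemma 3.1 (Tu et al., Lemma 5.4): the factor distance is controlled by the distance
between the corresponding positive semidefinite matrices. -/
theorem stmt4 {n r : ℕ} (Ustar U : Matrix (Fin n) (Fin r) ℝ) :
    2 * (Real.sqrt 2 - 1) * (singularValue Ustar r) ^ 2 * (distOrbit Ustar U) ^ 2 ≤
      (frobNorm (U * Uᵀ - Ustar * Ustarᵀ)) ^ 2 := by
  obtain ⟨hσ0, hσle⟩ := sv_facts Ustar
  obtain ⟨R, hR, hsym, hpsd⟩ := exists_procrustes Ustar U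
  set σ : ℝ := singularValue Ustar r with hσ
  set A : Matrix (Fin n) (Fin r) ℝ := Ustar * R with hA
  have hAAt : A * Aᵀ = Ustar * Ustarᵀ := by
    rw [hA, Matrix.transpose_mul]
    calc Ustar * R * (Rᵀ * Ustarᵀ) = Ustar * (R * Rᵀ) * Ustarᵀ := by
          simp only [Matrix.mul_assoc]
      _ = Ustar * Ustarᵀ := by rw [mul_eq_one_comm.mp hR, Matrix.mul_one]
  have gram : ∀ (m : ℕ) (B : Matrix (Fin m) (Fin r) ℝ) (x : Fin r → ℝ),
      x ⬝ᵥ ((Bᵀ * B) *ᵥ x) = (B *ᵥ x) ⬝ᵥ (B *ᵥ x) := by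
    intro m B x
    rw [← Matrix.mulVec_mulVec, Matrix.dotProduct_mulVec, Matrix.vecMul_transpose]
  have hGlb : ∀ x : Fin r → ℝ, σ ^ 2 * (x ⬝ᵥ x) ≤ x ⬝ᵥ ((Aᵀ * A) *ᵥ x) := by
    intro x
    have h1 : x ⬝ᵥ ((Aᵀ * A) *ᵥ x) = (A *ᵥ x) ⬝ᵥ (A *ᵥ x) := gram n A x
    have h2 : A *ᵥ x = Ustar *ᵥ (R *ᵥ x) := by rw [hA, ← Matrix.mulVec_mulVec]
    have h3 : (R *ᵥ x) ⬝ᵥ (R *ᵥ x) = x ⬝ᵥ x := by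
      have := gram r R x
      rw [hR, Matrix.one_mulVec] at this
      exact this.symm
    have h4 := hσle (R *ᵥ x)
    have h5 : (σ * e2norm (R *ᵥ x)) ^ 2 ≤ e2norm (Ustar *ᵥ (R *ᵥ x)) ^ 2 := by
      have hnn : 0 ≤ σ * e2norm (R *ᵥ x) := mul_nonneg hσ0 (e2norm_nonneg _)
      nlinarith [h4, hnn, e2norm_nonneg (Ustar *ᵥ (R *ᵥ x))]
    rw [h1, h2, ← h3, dot_eq_e2norm_sq, dot_eq_e2norm_sq]
    calc σ ^ 2 * e2norm (R *ᵥ x) ^ 2 = (σ * e2norm (R *ᵥ x)) ^ 2 := by ring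
      _ ≤ e2norm (Ustar *ᵥ (R *ᵥ x)) ^ 2 := h5
  have hcore := core_ineq A U (s := σ ^ 2) (sq_nonneg σ) hsym hpsd hGlb
  have hbdd : BddBelow {t : ℝ | ∃ R' : Matrix (Fin r) (Fin r) ℝ, R'ᵀ * R' = 1 ∧
      t = frobNorm (U - Ustar * R')} := by
    refine ⟨0, fun t ht => ?_⟩
    obtain ⟨R', _, rfl⟩ := ht
    exact frobNorm_nonneg _
  have hmem : frobNorm (U - A) ∈ {t : ℝ | ∃ R' : Matrix (Fin r) (Fin r) ℝ, R'ᵀ * R' = 1 ∧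
      t = frobNorm (U - Ustar * R')} := ⟨R, hR, rfl⟩
  have hdle : distOrbit Ustar U ≤ frobNorm (U - A) := csInf_le hbdd hmem
  have hd0 : 0 ≤ distOrbit Ustar U := by
    apply Real.sInf_nonneg
    intro t ht
    obtain ⟨R', _, rfl⟩ := ht
    exact frobNorm_nonneg _
  have hdsq : distOrbit Ustar U ^ 2 ≤ frobNorm (U - A) ^ 2 := by
    nlinarith [hdle, hd0]
  have h1 : (1:ℝ) ≤ Real.sqrt 2 := by
    nlinarith [Real.sq_sqrt (show (0:ℝ) ≤ 2 by norm_num), Real.sqrt_nonneg 2]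
  calc 2 * (Real.sqrt 2 - 1) * σ ^ 2 * distOrbit Ustar U ^ 2
      ≤ 2 * (Real.sqrt 2 - 1) * σ ^ 2 * frobNorm (U - A) ^ 2 := by
        apply mul_le_mul_of_nonneg_left hdsq
        have : (0:ℝ) ≤ Real.sqrt 2 - 1 := by linarith
        positivity
    _ ≤ frobNorm (U * Uᵀ - A * Aᵀ) ^ 2 := hcore
    _ = frobNorm (U * Uᵀ - Ustar * Ustarᵀ) ^ 2 := by rw [hAAt]
end

section
/- Let 0 < δ < (1/3)√(2/π), suppose the outlier ratio p = |Ω|/m satisfies p < 1/2 − δ/(√(2/π) − δ), and suppose that 𝒜 and 𝒜_{Ω^c} satisfy the ℓ1/ℓ2-RIP with constant δ over matrices of rank at most 2r (namely, (√(2/π) − δ)‖X‖_F ≤ (1/m)‖𝒜(X)‖₁ ≤ (√(2/π) + δ)‖X‖_F and (√(2/π) − δ)‖X‖_F ≤ (1/(m(1−p)))·Σ_{i∉Ω}|⟨A_i,X⟩| ≤ (√(2/π) + δ)‖X‖_F for all such X). Set α = √(2(√2 − 1)·σ_r(X⋆))·(2(1−p)(√(2/π) − δ) − (√(2/π) + δ))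 and τ = 2(√(2/π) + δ). Then for every U ∈ ℝ^{n×r} with dist(U, 𝒰) ≤ 2α/τ and every D ∈ ℝ^{n×r} that is a Fréchet subgradient of f at U (i.e. liminf_{U'→U} (f(U') − f(U) − ⟨D, U' − U⟩)/‖U' − U‖_F ≥ 0), one has ‖D‖_F ≤ 2(√(2/π) + δ)·(‖U⋆‖_F + 2α/τ). -/
open Matrix
open scoped BigOperators

/-- ℓ₁-norm of a vector in `ℝ^m`. -/
noncomputable def l1Norm {m : ℕ} (v : Fin m → ℝ) : ℝ := ∑ i, |v i|

/-- The linear measurement operator `𝒜(X)ᵢ = ⟨Aᵢ, X⟩ = trace(Aᵢᵀ X)`. -/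
noncomputable def measOp {α β : Type*} [Fintype α] [Fintype β] {m : ℕ}
    (A : Fin m → Matrix α β ℝ) (X : Matrix α β ℝ) : Fin m → ℝ :=
  fun i => ∑ j, ∑ k, A i j k * X j k

/-- The ℓ₁-loss objective `f(U) = (1/m) ‖y − 𝒜(UUᵀ)‖₁` in the PSD case. -/
noncomputable def objF {n r m : ℕ} (A : Fin m → Matrix (Fin n) (Fin n) ℝ)
    (y : Fin m → ℝ) (U : Matrix (Fin n) (Fin r) ℝ) : ℝ :=
  (1 / m) * l1Norm (fun i => y i - measOp A (U * Uᵀ) i)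


/-- Trace inner product `⟨A, B⟩ = trace(AᵀB)` on real matrices. -/
noncomputable def minner {α β : Type*} [Fintype α] [Fintype β] (A B : Matrix α β ℝ) : ℝ :=
  ∑ i, ∑ j, A i j * B i j

set_option linter.unusedSectionVars false

section Aux
variable {α β γ : Type*} [Fintype α] [Fintype β] [Fintype γ]

noncomputable def toEuc (A : Matrix α β ℝ) : EuclideanSpace ℝ (α × β) :=
  WithLp.toLp 2 (fun p : α × β => A p.1 p.2)

lemma frob_eq_norm (A : Matrix α β ℝ) : frobNorm A = ‖toEuc A‖ := by
  rw [EuclideanSpace.norm_eq]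
  simp [frobNorm, Fintype.sum_prod_type, toEuc, Real.norm_eq_abs, sq_abs]

lemma toEuc_sub (A B : Matrix α β ℝ) : toEuc (A - B) = toEuc A - toEuc B := by
  ext p; simp [toEuc]
lemma toEuc_add (A B : Matrix α β ℝ) : toEuc (A + B) = toEuc A + toEuc B := by
  ext p; simp [toEuc]
lemma toEuc_smul (t : ℝ) (A : Matrix α β ℝ) : toEuc (t • A) = t • toEuc A := by
  ext p; simp [toEuc]

lemma minner_eq_inner (A B : Matrix α β ℝ) :
    minner A B = (inner ℝ (toEuc A) (toEuc B) : ℝ) := by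
  simp [minner, toEuc, PiLp.inner_apply, RCLike.inner_apply, Fintype.sum_prod_type, mul_comm]

lemma frob_nonneg (A : Matrix α β ℝ) : 0 ≤ frobNorm A := Real.sqrt_nonneg _

lemma frob_add_le (A B : Matrix α β ℝ) : frobNorm (A + B) ≤ frobNorm A + frobNorm B := by
  rw [frob_eq_norm, frob_eq_norm, frob_eq_norm, toEuc_add]; exact norm_add_le _ _

lemma frob_smul (t : ℝ) (A : Matrix α β ℝ) : frobNorm (t • A) = |t| * frobNorm A := by
  rw [frob_eq_norm, frob_eq_norm, toEuc_smul, norm_smul, Real.norm_eq_abs]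

lemma frob_neg (A : Matrix α β ℝ) : frobNorm (-A) = frobNorm A := by
  simp [frobNorm]

lemma frob_zero : frobNorm (0 : Matrix α β ℝ) = 0 := by simp [frobNorm]

lemma frob_pos {A : Matrix α β ℝ} (h : A ≠ 0) : 0 < frobNorm A := by
  rw [frob_eq_norm]
  refine norm_pos_iff.mpr fun h0 => h ?_
  ext i j
  have := congrArg (fun v => v (i, j)) h0
  simpa [toEuc] using this

lemma minner_self (A : Matrix α β ℝ) : minner A A = frobNorm A ^ 2 := by
  rw [minner_eq_inner, frob_eq_norm, real_inner_self_eq_norm_sq]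

lemma abs_minner_le (A B : Matrix α β ℝ) : |minner A B| ≤ frobNorm A * frobNorm B := by
  rw [minner_eq_inner, frob_eq_norm, frob_eq_norm]
  exact abs_real_inner_le_norm _ _

lemma minner_smul_right (t : ℝ) (A B : Matrix α β ℝ) :
    minner A (t • B) = t * minner A B := by
  simp [minner, Matrix.smul_apply, smul_eq_mul, Finset.mul_sum]
  congr 1; ext i; congr 1; ext j; ring

lemma frob_sq (A : Matrix α β ℝ) : frobNorm A ^ 2 = ∑ i, ∑ j, (A i j) ^ 2 := by
  rw [frobNorm, Real.sq_sqrt]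
  exact Finset.sum_nonneg fun i _ => Finset.sum_nonneg fun j _ => sq_nonneg _

lemma frob_transpose (A : Matrix α β ℝ) : frobNorm Aᵀ = frobNorm A := by
  rw [frobNorm, frobNorm, Finset.sum_comm]
  rfl

lemma frob_mul_le (A : Matrix α β ℝ) (B : Matrix β γ ℝ) :
    frobNorm (A * B) ≤ frobNorm A * frobNorm B := by
  have h1 : ∀ (X : Matrix α γ ℝ), frobNorm X = Real.sqrt (∑ i, ∑ j, (X i j)^2) := fun _ => rfl
  rw [h1, frobNorm, frobNorm, ← Real.sqrt_mul (by positivity)]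
  apply Real.sqrt_le_sqrt
  calc ∑ i, ∑ k, ((A * B) i k) ^ 2
      ≤ ∑ i, ∑ k, (∑ j, (A i j)^2) * (∑ j, (B j k)^2) := by
        refine Finset.sum_le_sum fun i _ => Finset.sum_le_sum fun k _ => ?_
        rw [Matrix.mul_apply]
        exact Finset.sum_mul_sq_le_sq_mul_sq _ _ _
    _ = (∑ i, ∑ j, (A i j)^2) * (∑ j, ∑ k, (B j k)^2) := by
        rw [Finset.sum_mul]
        refine Finset.sum_congr rfl fun i _ => ?_
        rw [← Finset.mul_sum, Finset.sum_comm, Finset.mul_sum]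

lemma frob_sq_trace (X : Matrix α β ℝ) : frobNorm X ^ 2 = Matrix.trace (Xᵀ * X) := by
  rw [frob_sq, Matrix.trace]
  simp only [Matrix.diag, Matrix.mul_apply, Matrix.transpose_apply, sq]
  exact Finset.sum_comm

lemma frob_mul_orth {r : ℕ} (M : Matrix α (Fin r) ℝ) (R : Matrix (Fin r) (Fin r) ℝ)
    (hR : Rᵀ * R = 1) : frobNorm (M * R) = frobNorm M := by
  have hR' : R * Rᵀ = 1 := mul_eq_one_comm.mp hR
  have h2 : frobNorm (M * R) ^ 2 = frobNorm M ^ 2 := by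
    rw [frob_sq_trace, frob_sq_trace, Matrix.transpose_mul]
    calc Matrix.trace (Rᵀ * Mᵀ * (M * R)) = Matrix.trace (Rᵀ * (Mᵀ * M * R)) := by
          rw [Matrix.mul_assoc, Matrix.mul_assoc]
      _ = Matrix.trace (Mᵀ * M * R * Rᵀ) := Matrix.trace_mul_comm _ _
      _ = Matrix.trace (Mᵀ * M) := by rw [Matrix.mul_assoc, hR', Matrix.mul_one]
  have := frob_nonneg (M * R)
  have := frob_nonneg M
  nlinarith

lemma matrix_rank_add_le (A B : Matrix α β ℝ) [DecidableEq β] :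
    (A + B).rank ≤ A.rank + B.rank := by
  rw [Matrix.rank, Matrix.rank, Matrix.rank]
  have hle : LinearMap.range (A + B).mulVecLin ≤
      LinearMap.range A.mulVecLin ⊔ LinearMap.range B.mulVecLin := by
    rintro x ⟨v, rfl⟩
    rw [Matrix.mulVecLin_add, LinearMap.add_apply]
    exact Submodule.add_mem_sup (LinearMap.mem_range_self _ v) (LinearMap.mem_range_self _ v)
  exact (Submodule.finrank_mono hle).trans
    (Submodule.finrank_add_le_finrank_add_finrank _ _)

lemma frob_continuous : Continuous (frobNorm : Matrix α β ℝ → ℝ) := by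
  unfold frobNorm
  exact Real.continuous_sqrt.comp (continuous_finset_sum _ fun i _ =>
    continuous_finset_sum _ fun j _ => (continuous_id.matrix_elem i j).pow 2)

lemma measOp_sub {m : ℕ} (A : Fin m → Matrix α β ℝ) (X Y : Matrix α β ℝ) (i : Fin m) :
    measOp A (X - Y) i = measOp A X i - measOp A Y i := by
  simp [measOp, Matrix.sub_apply, mul_sub, Finset.sum_sub_distrib]

lemma distOrbit_ge {r : ℕ} (Ws W : Matrix α (Fin r) ℝ) :
    frobNorm W - frobNorm Ws ≤ distOrbit Ws W := by
  refine le_csInf ⟨frobNorm (W - Ws * 1), 1, by simp, rfl⟩ ?_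
  rintro t ⟨R, hR, rfl⟩
  have h1 : frobNorm W ≤ frobNorm (W - Ws * R) + frobNorm (Ws * R) := by
    calc frobNorm W = frobNorm ((W - Ws * R) + Ws * R) := by rw [sub_add_cancel]
      _ ≤ _ := frob_add_le _ _
  rw [frob_mul_orth _ _ hR] at h1
  linarith

end Aux

section Obj
variable {n r m : ℕ}

lemma objF_diff_le (A : Fin m → Matrix (Fin n) (Fin n) ℝ) (y : Fin m → ℝ)
    (V W : Matrix (Fin n) (Fin r) ℝ) :
    objF A y V - objF A y W ≤ (1 / m) * l1Norm (measOp A (V * Vᵀ - W * Wᵀ)) := by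
  rw [objF, objF, ← mul_sub]
  refine mul_le_mul_of_nonneg_left ?_ (by positivity)
  rw [l1Norm, l1Norm, l1Norm, ← Finset.sum_sub_distrib]
  refine Finset.sum_le_sum fun i _ => ?_
  rw [measOp_sub]
  have h := abs_sub_abs_le_abs_sub (y i - measOp A (V * Vᵀ) i) (y i - measOp A (W * Wᵀ) i)
  rw [sub_sub_sub_cancel_left] at h
  calc |y i - measOp A (V * Vᵀ) i| - |y i - measOp A (W * Wᵀ) i|
      ≤ |measOp A (W * Wᵀ) i - measOp A (V * Vᵀ) i| := h
    _ = |measOp A (V * Vᵀ) i - measOp A (W * Wᵀ) i| := abs_sub_comm _ _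

lemma outer_diff_decomp (V W : Matrix (Fin n) (Fin r) ℝ) :
    V * Vᵀ - W * Wᵀ = V * (V - W)ᵀ + (V - W) * Wᵀ := by
  rw [Matrix.transpose_sub, Matrix.mul_sub, Matrix.sub_mul, sub_add_sub_cancel]

lemma rank_outer_diff_le (V W : Matrix (Fin n) (Fin r) ℝ) :
    (V * Vᵀ - W * Wᵀ).rank ≤ 2 * r := by
  rw [outer_diff_decomp]
  calc (V * (V - W)ᵀ + (V - W) * Wᵀ).rank
      ≤ (V * (V - W)ᵀ).rank + ((V - W) * Wᵀ).rank := matrix_rank_add_le _ _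
    _ ≤ r + r := add_le_add
        ((Matrix.rank_mul_le_left _ _).trans (V.rank_le_card_width.trans (by simp)))
        ((Matrix.rank_mul_le_left _ _).trans ((V - W).rank_le_card_width.trans (by simp)))
    _ = 2 * r := (two_mul r).symm

lemma frob_outer_diff_le (V W : Matrix (Fin n) (Fin r) ℝ) :
    frobNorm (V * Vᵀ - W * Wᵀ) ≤ (frobNorm V + frobNorm W) * frobNorm (V - W) := by
  rw [outer_diff_decomp]
  calc frobNorm (V * (V - W)ᵀ + (V - W) * Wᵀ)
      ≤ frobNorm (V * (V - W)ᵀ) + frobNorm ((V - W) * Wᵀ) := frob_add_le _ _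
    _ ≤ frobNorm V * frobNorm (V - W)ᵀ + frobNorm (V - W) * frobNorm Wᵀ :=
        add_le_add (frob_mul_le _ _) (frob_mul_le _ _)
    _ = (frobNorm V + frobNorm W) * frobNorm (V - W) := by
        rw [frob_transpose, frob_transpose]; ring

end Obj

/-- Proposition 3.5: bound on the Frobenius norm of any Fréchet subgradient of `f` in the
neighborhood `dist(U, 𝒰) ≤ 2α/τ` of the optimal set. -/
theorem stmt10 {n r m : ℕ} (hm : 0 < m)
    (A : Fin m → Matrix (Fin n) (Fin n) ℝ)
    (Ustar : Matrix (Fin n) (Fin r) ℝ)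
    (hrank : (Ustar * Ustarᵀ).rank = r)
    (sstar : Fin m → ℝ) (Ω : Finset (Fin m))
    (hsupp : ∀ i ∉ Ω, sstar i = 0)
    (δ : ℝ) (hδ0 : 0 < δ) (hδ1 : δ < 1 / 3 * Real.sqrt (2 / Real.pi))
    (hp : (Ω.card : ℝ) / m < 1 / 2 - δ / (Real.sqrt (2 / Real.pi) - δ))
    (hRIP : ∀ X : Matrix (Fin n) (Fin n) ℝ, X.rank ≤ 2 * r →
      (Real.sqrt (2 / Real.pi) - δ) * frobNorm X ≤ (1 / m) * l1Norm (measOp A X) ∧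
        (1 / m) * l1Norm (measOp A X) ≤ (Real.sqrt (2 / Real.pi) + δ) * frobNorm X)
    (hRIPc : ∀ X : Matrix (Fin n) (Fin n) ℝ, X.rank ≤ 2 * r →
      (Real.sqrt (2 / Real.pi) - δ) * frobNorm X ≤
          (1 / (m * (1 - (Ω.card : ℝ) / m))) * ∑ i ∈ Ωᶜ, |measOp A X i| ∧
        (1 / (m * (1 - (Ω.card : ℝ) / m))) * ∑ i ∈ Ωᶜ, |measOp A X i| ≤
          (Real.sqrt (2 / Real.pi) + δ) * frobNorm X)
    (α τ : ℝ)
    (hαdef : α = Real.sqrt (2 * (Real.sqrt 2 - 1) * singularValue (Ustar * Ustarᵀ) r) *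
      (2 * (1 - (Ω.card : ℝ) / m) * (Real.sqrt (2 / Real.pi) - δ) -
        (Real.sqrt (2 / Real.pi) + δ)))
    (hτdef : τ = 2 * (Real.sqrt (2 / Real.pi) + δ)) :
    ∀ U D : Matrix (Fin n) (Fin r) ℝ,
      distOrbit Ustar U ≤ 2 * α / τ →
      0 ≤ Filter.liminf (fun U' : Matrix (Fin n) (Fin r) ℝ =>
        (objF A (fun i => measOp A (Ustar * Ustarᵀ) i + sstar i) U' -
          objF A (fun i => measOp A (Ustar * Ustarᵀ) i + sstar i) U -
            minner D (U' - U)) / frobNorm (U' - U)) (nhdsWithin U {U}ᶜ) →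
      frobNorm D ≤
        2 * (Real.sqrt (2 / Real.pi) + δ) * (frobNorm Ustar + 2 * α / τ) := by
  intro U D hdist hlim
  have hcpos : 0 < Real.sqrt (2 / Real.pi) := Real.sqrt_pos.mpr (by positivity)
  set c : ℝ := Real.sqrt (2 / Real.pi) with hcdef
  have hcd : 0 < c + δ := by linarith
  set y : Fin m → ℝ := fun i => measOp A (Ustar * Ustarᵀ) i + sstar i with hy
  -- local Lipschitz-type bound
  have hkey : ∀ V W : Matrix (Fin n) (Fin r) ℝ,
      objF A y V - objF A y W ≤ (c + δ) * ((frobNorm V + frobNorm W) * frobNorm (V - W)) := by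
    intro V W
    have h1 := objF_diff_le A y V W
    have h2 := (hRIP (V * Vᵀ - W * Wᵀ) (rank_outer_diff_le V W)).2
    have h3 := frob_outer_diff_le V W
    have h4 : (c + δ) * frobNorm (V * Vᵀ - W * Wᵀ) ≤
        (c + δ) * ((frobNorm V + frobNorm W) * frobNorm (V - W)) :=
      mul_le_mul_of_nonneg_left h3 hcd.le
    linarith
  -- main bound via the subgradient inequality
  have hmain : frobNorm D ≤ 2 * (c + δ) * frobNorm U := by
    by_cases hD : D = 0
    · rw [hD, frob_zero]
      have := frob_nonneg U
      positivity
    · have hDpos : 0 < frobNorm D := frob_pos hD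
      rw [Filter.liminf_eq] at hlim
      set g : Matrix (Fin n) (Fin r) ℝ → ℝ := fun U' =>
        (objF A y U' - objF A y U - minner D (U' - U)) / frobNorm (U' - U) with hg
      set S : Set ℝ := {a | ∀ᶠ U' in nhdsWithin U {U}ᶜ, a ≤ g U'} with hS
      have hSup : 0 ≤ sSup S := hlim
      -- S is nonempty
      have hSne : S.Nonempty := by
        refine ⟨-((c + δ) * (2 * frobNorm U + 1) + frobNorm D), ?_⟩
        have h1 : ∀ᶠ U' in nhdsWithin U {U}ᶜ, frobNorm (U' - U) < 1 := by
          have hcont2 : Filter.Tendsto (fun U' : Matrix (Fin n) (Fin r) ℝ =>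
              frobNorm (U' - U)) (nhds U) (nhds 0) := by
            have hcts : Continuous fun U' : Matrix (Fin n) (Fin r) ℝ => frobNorm (U' - U) :=
              frob_continuous.comp (continuous_id.sub continuous_const)
            have h0 := hcts.tendsto U
            simpa [frob_zero] using h0
          exact (hcont2.eventually_lt_const one_pos).filter_mono nhdsWithin_le_nhds
        have h2 : ∀ᶠ U' in nhdsWithin U {U}ᶜ, U' ≠ U :=
          Filter.eventually_of_mem self_mem_nhdsWithin fun x hx => hx
        filter_upwards [h1, h2] with U' hlt hne
        have hΔ : U' - U ≠ 0 := sub_ne_zero.mpr hne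
        have hΔpos : 0 < frobNorm (U' - U) := frob_pos hΔ
        have hU' : frobNorm U' ≤ frobNorm U + 1 := by
          have : frobNorm U' ≤ frobNorm (U' - U) + frobNorm U := by
            calc frobNorm U' = frobNorm ((U' - U) + U) := by rw [sub_add_cancel]
              _ ≤ _ := frob_add_le _ _
          linarith
        have hfd : -((c + δ) * ((frobNorm U + frobNorm U') * frobNorm (U' - U)))
            ≤ objF A y U' - objF A y U := by
          have hk := hkey U U'
          have he : frobNorm (U - U') = frobNorm (U' - U) := by
            rw [← neg_sub U' U, frob_neg]
          rw [he] at hk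
          linarith
        have hmin : minner D (U' - U) ≤ frobNorm D * frobNorm (U' - U) :=
          (le_abs_self _).trans (abs_minner_le _ _)
        show -((c + δ) * (2 * frobNorm U + 1) + frobNorm D) ≤ g U'
        rw [hg]
        rw [le_div_iff₀ hΔpos]
        have h5 : (frobNorm U + frobNorm U') * frobNorm (U' - U)
            ≤ (2 * frobNorm U + 1) * frobNorm (U' - U) :=
          mul_le_mul_of_nonneg_right (by linarith) hΔpos.le
        have h6 : (c + δ) * ((frobNorm U + frobNorm U') * frobNorm (U' - U))
            ≤ (c + δ) * ((2 * frobNorm U + 1) * frobNorm (U' - U)) :=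
          mul_le_mul_of_nonneg_left h5 hcd.le
        nlinarith
      -- every element of S is at most B
      have hub : ∀ a ∈ S, a ≤ 2 * (c + δ) * frobNorm U - frobNorm D := by
        intro a ha
        set ray : ℝ → Matrix (Fin n) (Fin r) ℝ := fun t => U + t • D with hray
        have hcontray : Continuous ray := continuous_const.add (continuous_id.smul continuous_const)
        have htends : Filter.Tendsto ray (nhdsWithin 0 (Set.Ioi 0)) (nhdsWithin U {U}ᶜ) := by
          rw [tendsto_nhdsWithin_iff]
          constructor
          · have h0 : Filter.Tendsto ray (nhds 0) (nhds (ray 0)) := hcontray.tendsto 0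
            have he : ray 0 = U := by simp [hray]
            rw [he] at h0
            exact h0.mono_left nhdsWithin_le_nhds
          · refine Filter.eventually_of_mem self_mem_nhdsWithin fun t ht => ?_
            simp only [Set.mem_compl_iff, Set.mem_singleton_iff, hray]
            intro h
            have h0 : t • D = 0 := by
              have := congrArg (fun X => X - U) h
              simpa using this
            exact smul_ne_zero (ne_of_gt ht) hD h0
        have hev : ∀ᶠ t in nhdsWithin (0:ℝ) (Set.Ioi 0), a ≤ g (ray t) := htends.eventually ha
        have hψ : ∀ᶠ t in nhdsWithin (0:ℝ) (Set.Ioi 0),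
            g (ray t) ≤ (c + δ) * (frobNorm (U + t • D) + frobNorm U) - frobNorm D := by
          refine Filter.eventually_of_mem self_mem_nhdsWithin fun t ht => ?_
          have htpos : (0:ℝ) < t := ht
          have hsub : ray t - U = t • D := by simp [hray]
          have hfr : frobNorm (ray t - U) = t * frobNorm D := by
            rw [hsub, frob_smul, abs_of_pos htpos]
          have hnum : objF A y (ray t) - objF A y U ≤
              (c + δ) * ((frobNorm (U + t • D) + frobNorm U) * (t * frobNorm D)) := by
            have hk := hkey (ray t) U
            rw [hfr] at hk
            exact hk
          have hmin2 : minner D (ray t - U) = t * frobNorm D ^ 2 := by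
            rw [hsub, minner_smul_right, minner_self]
          rw [hg]
          show (objF A y (ray t) - objF A y U - minner D (ray t - U)) / frobNorm (ray t - U)
              ≤ (c + δ) * (frobNorm (U + t • D) + frobNorm U) - frobNorm D
          rw [hfr, hmin2, div_le_iff₀ (by positivity)]
          nlinarith [hnum]
        have hlim2 : Filter.Tendsto
            (fun t : ℝ => (c + δ) * (frobNorm (U + t • D) + frobNorm U) - frobNorm D)
            (nhdsWithin 0 (Set.Ioi 0)) (nhds (2 * (c + δ) * frobNorm U - frobNorm D)) := by
          have hcont3 : Continuous
              (fun t : ℝ => (c + δ) * (frobNorm (U + t • D) + frobNorm U) - frobNorm D) := by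
            have h1 : Continuous fun t : ℝ => frobNorm (U + t • D) :=
              frob_continuous.comp (continuous_const.add (continuous_id.smul continuous_const))
            exact (continuous_const.mul (h1.add continuous_const)).sub continuous_const
          have h0 := hcont3.tendsto 0
          have he : (c + δ) * (frobNorm (U + (0:ℝ) • D) + frobNorm U) - frobNorm D
              = 2 * (c + δ) * frobNorm U - frobNorm D := by
            simp; ring
          rw [he] at h0
          exact h0.mono_left nhdsWithin_le_nhds
        exact ge_of_tendsto hlim2 ((hev.and hψ).mono fun t h => h.1.trans h.2)
      have hsup_le : sSup S ≤ 2 * (c + δ) * frobNorm U - frobNorm D := csSup_le hSne hub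
      linarith
  -- conclude
  have hU : frobNorm U ≤ frobNorm Ustar + 2 * α / τ := by
    have := distOrbit_ge Ustar U
    linarith
  calc frobNorm D ≤ 2 * (c + δ) * frobNorm U := hmain
    _ ≤ 2 * (c + δ) * (frobNorm Ustar + 2 * α / τ) := by
        refine mul_le_mul_of_nonneg_left hU (by linarith)
end

section
/- Suppose that (√(2/π) − δ)‖X‖_F ≤ (1/m)‖𝒜(X)‖₁ ≤ (√(2/π) + δ)‖X‖_F for every X ∈ ℝ^{n₁×n₂} of rank at most 2r, and (√(2/π) − δ)‖X‖_F ≤ (1/(m(1−p)))·Σ_{i∉Ω}|⟨A_i, X⟩| ≤ (√(2/π) + δ)‖X‖_F for every such X, where p = |Ω|/m. Then for every U ∈ ℝ^{n₁×r} and V ∈ ℝ^{n₂×r}, (1/m)‖y − 𝒜(UVᵀ)‖₁ − (1/m)‖y − 𝒜(X⋆)‖₁ ≥ (2(1−p)(√(2/π) − δ) − (√(2/π) + δ))·‖UVᵀ − X⋆‖_F. -/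
open Matrix
open scoped BigOperators

/-- Auxiliary: rank of a sum is at most the sum of ranks. -/
lemma matRank_add_le {k l : Type*} [Fintype k] [Fintype l] [DecidableEq l]
    (X Y : Matrix k l ℝ) : (X + Y).rank ≤ X.rank + Y.rank := by
  have h : LinearMap.range (X + Y).mulVecLin ≤
      LinearMap.range X.mulVecLin ⊔ LinearMap.range Y.mulVecLin := by
    rintro _ ⟨v, rfl⟩
    rw [Matrix.mulVecLin_add]
    exact Submodule.add_mem_sup (LinearMap.mem_range_self _ v) (LinearMap.mem_range_self _ v)
  calc (X + Y).rank
      ≤ Module.finrank ℝ ↥(LinearMap.range X.mulVecLin ⊔ LinearMap.range Y.mulVecLin) :=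
        Submodule.finrank_mono h
    _ ≤ X.rank + Y.rank := Submodule.finrank_add_le_finrank_add_finrank _ _

/-- Auxiliary: rank of a negation. -/
lemma matRank_neg {k l : Type*} [Fintype k] [Fintype l] [DecidableEq l]
    (X : Matrix k l ℝ) : (-X).rank = X.rank := by
  have h : (-X).mulVecLin = -X.mulVecLin := by
    ext v
    simp [Matrix.mulVecLin_apply, Matrix.neg_mulVec]
  unfold Matrix.rank
  rw [h, LinearMap.range_neg]

/-- Inequality (4.3): sharpness of the unregularized ℓ₁-loss with respect to
`‖UVᵀ − X⋆‖_F` in the general (rectangular) case. -/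
theorem stmt12 {n₁ n₂ r m : ℕ} (hm : 0 < m)
    (A : Fin m → Matrix (Fin n₁) (Fin n₂) ℝ)
    (Xstar : Matrix (Fin n₁) (Fin n₂) ℝ) (hrank : Xstar.rank = r)
    (sstar : Fin m → ℝ) (Ω : Finset (Fin m))
    (hsupp : ∀ i ∉ Ω, sstar i = 0)
    (δ : ℝ)
    (hRIP : ∀ X : Matrix (Fin n₁) (Fin n₂) ℝ, X.rank ≤ 2 * r →
      (Real.sqrt (2 / Real.pi) - δ) * frobNorm X ≤ (1 / m) * l1Norm (measOp A X) ∧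
        (1 / m) * l1Norm (measOp A X) ≤ (Real.sqrt (2 / Real.pi) + δ) * frobNorm X)
    (hRIPc : ∀ X : Matrix (Fin n₁) (Fin n₂) ℝ, X.rank ≤ 2 * r →
      (Real.sqrt (2 / Real.pi) - δ) * frobNorm X ≤
          (1 / (m * (1 - (Ω.card : ℝ) / m))) * ∑ i ∈ Ωᶜ, |measOp A X i| ∧
        (1 / (m * (1 - (Ω.card : ℝ) / m))) * ∑ i ∈ Ωᶜ, |measOp A X i| ≤
          (Real.sqrt (2 / Real.pi) + δ) * frobNorm X) :
    ∀ (U : Matrix (Fin n₁) (Fin r) ℝ) (V : Matrix (Fin n₂) (Fin r) ℝ),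
      (2 * (1 - (Ω.card : ℝ) / m) * (Real.sqrt (2 / Real.pi) - δ) -
          (Real.sqrt (2 / Real.pi) + δ)) * frobNorm (U * Vᵀ - Xstar) ≤
        (1 / m) * l1Norm (fun i => (measOp A Xstar i + sstar i) - measOp A (U * Vᵀ) i) -
          (1 / m) * l1Norm (fun i => (measOp A Xstar i + sstar i) - measOp A Xstar i) := by
  intro U V
  have hm' : (0:ℝ) < m := by exact_mod_cast hm
  set E : Matrix (Fin n₁) (Fin n₂) ℝ := U * Vᵀ - Xstar with hE
  have hrankE : E.rank ≤ 2 * r := by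
    have h1 : (U * Vᵀ).rank ≤ r := le_trans (Matrix.rank_mul_le_left U Vᵀ)
      (by simpa using Matrix.rank_le_card_width U)
    have h2 : (-Xstar).rank ≤ r := by rw [matRank_neg]; exact le_of_eq hrank
    calc E.rank = (U * Vᵀ + -Xstar).rank := by rw [hE, sub_eq_add_neg]
      _ ≤ (U * Vᵀ).rank + (-Xstar).rank := matRank_add_le _ _
      _ ≤ r + r := add_le_add h1 h2
      _ = 2 * r := (two_mul r).symm
  set c : Fin m → ℝ := measOp A E with hcdef
  have hc : ∀ i, measOp A (U * Vᵀ) i = measOp A Xstar i + c i := by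
    intro i
    simp only [hcdef, hE, measOp, Matrix.sub_apply, mul_sub, Finset.sum_sub_distrib]
    ring
  set p : ℝ := (Ω.card : ℝ) / m with hp
  have hq : 0 ≤ 1 - p := by
    have h1 : Ω.card ≤ m := by simpa using Finset.card_le_univ Ω
    have : p ≤ 1 := by
      rw [hp, div_le_one hm']
      exact_mod_cast h1
    linarith
  set s := Real.sqrt (2 / Real.pi) with hs
  set F := frobNorm E with hF
  -- inequality from complement RIP
  have h1 : (1 - p) * ((s - δ) * F) ≤ (1 / m) * ∑ i ∈ Ωᶜ, |c i| := by
    rcases hq.eq_or_lt with h | h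
    · rw [← h, zero_mul]
      have : (0:ℝ) ≤ ∑ i ∈ Ωᶜ, |c i| := Finset.sum_nonneg fun i _ => abs_nonneg _
      positivity
    · have hr1 := (hRIPc E hrankE).1
      have hmq : (0:ℝ) < (m:ℝ) * (1 - p) := mul_pos hm' h
      calc (1 - p) * ((s - δ) * F)
          ≤ (1 - p) * ((1 / ((m:ℝ) * (1 - p))) * ∑ i ∈ Ωᶜ, |c i|) :=
            mul_le_mul_of_nonneg_left hr1 (le_of_lt h)
         _ = (1 / m) * ∑ i ∈ Ωᶜ, |c i| := by
            field_simp
  have h2 : (1 / (m:ℝ)) * ∑ i, |c i| ≤ (s + δ) * F := by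
    have := (hRIP E hrankE).2
    simpa [l1Norm] using this
  have e1 : ∀ i, (measOp A Xstar i + sstar i) - measOp A (U * Vᵀ) i = sstar i - c i := by
    intro i; rw [hc i]; ring
  have e2 : ∀ i : Fin m, (measOp A Xstar i + sstar i) - measOp A Xstar i = sstar i :=
    fun i => by ring
  simp only [l1Norm, e1, e2]
  -- key pointwise estimate
  have key : ∑ i ∈ Ωᶜ, |c i| - ∑ i ∈ Ω, |c i| ≤ ∑ i, (|sstar i - c i| - |sstar i|) := by
    rw [← Finset.sum_add_sum_compl Ω (fun i => |sstar i - c i| - |sstar i|)]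
    have hA : -∑ i ∈ Ω, |c i| ≤ ∑ i ∈ Ω, (|sstar i - c i| - |sstar i|) := by
      rw [← Finset.sum_neg_distrib]
      refine Finset.sum_le_sum fun i _ => ?_
      have h3 : |sstar i| ≤ |sstar i - c i| + |c i| := by
        have := abs_add_le (sstar i - c i) (c i)
        simpa using this
      linarith
    have hB : ∑ i ∈ Ωᶜ, (|sstar i - c i| - |sstar i|) = ∑ i ∈ Ωᶜ, |c i| :=
      Finset.sum_congr rfl fun i hi => by
        rw [hsupp i (Finset.mem_compl.mp hi)]; simp
    linarith
  have hsplit : ∑ i ∈ Ω, |c i| + ∑ i ∈ Ωᶜ, |c i| = ∑ i, |c i| :=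
    Finset.sum_add_sum_compl Ω _
  have hsub : ∑ i, (|sstar i - c i| - |sstar i|) = ∑ i, |sstar i - c i| - ∑ i, |sstar i| :=
    Finset.sum_sub_distrib _ _
  have hmnn : (0:ℝ) ≤ 1 / (m:ℝ) := by positivity
  have key2 : (1/(m:ℝ)) * (∑ i ∈ Ωᶜ, |c i| - ∑ i ∈ Ω, |c i|)
      ≤ (1/(m:ℝ)) * (∑ i, |sstar i - c i| - ∑ i, |sstar i|) := by
    rw [← hsub]
    exact mul_le_mul_of_nonneg_left key hmnn
  nlinarith [key2, h1, h2, hsplit]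
end

section
/- Let U⋆ ∈ ℝ^{n₁×r} and V⋆ ∈ ℝ^{n₂×r} satisfy U⋆ᵀU⋆ = V⋆ᵀV⋆. Then for all U ∈ ℝ^{n₁×r} and V ∈ ℝ^{n₂×r}, writing W = [U; V] and W⋆ = [U⋆; V⋆] for the vertically stacked matrices in ℝ^{(n₁+n₂)×r}: ‖U⋆V⋆ᵀ − UVᵀ‖_F² + (1/4)‖UᵀU − VᵀV‖_F² = (1/4)‖WWᵀ − W⋆W⋆ᵀ‖_F² + (1/2)‖UᵀU⋆ − VᵀV⋆‖_F². In particular, ‖U⋆V⋆ᵀ − UVᵀ‖_F² + (1/4)‖UᵀU − VᵀV‖_F² ≥ (1/4)‖WWᵀ − W⋆W⋆ᵀ‖_F². -/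
open Matrix
open scoped BigOperators

lemma fnsq {α β : Type*} [Fintype α] [Fintype β] (A : Matrix α β ℝ) :
    (frobNorm A) ^ 2 = Matrix.trace (Aᵀ * A) := by
  rw [frobNorm, Real.sq_sqrt (by positivity)]
  simp [Matrix.trace, Matrix.mul_apply, Matrix.diag, sq]
  exact Finset.sum_comm

lemma trr {a b c d : Type*} [Fintype a] [Fintype b] [Fintype c] [Fintype d]
    (A : Matrix a b ℝ) (B : Matrix b c ℝ) (C : Matrix c d ℝ) (D : Matrix d a ℝ) :
    Matrix.trace (A * B * (C * D)) = Matrix.trace (B * C * (D * A)) := by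
  rw [show A * B * (C * D) = A * (B * C * D) by simp [Matrix.mul_assoc],
      Matrix.trace_mul_comm,
      show B * C * D * A = B * C * (D * A) by simp [Matrix.mul_assoc]]

lemma trt {a b c d : Type*} [Fintype a] [Fintype b] [Fintype c] [Fintype d]
    (A : Matrix a b ℝ) (B : Matrix b c ℝ) (C : Matrix c d ℝ) (D : Matrix d a ℝ) :
    Matrix.trace (A * B * (C * D)) = Matrix.trace (Dᵀ * Cᵀ * (Bᵀ * Aᵀ)) := by
  rw [← Matrix.trace_transpose (A * B * (C * D))]
  simp [Matrix.transpose_mul, Matrix.mul_assoc]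

/-- The key algebraic identity in the proof of Proposition 4.1 (nonnegativity of ν(W)),
for balanced factors `U⋆ᵀU⋆ = V⋆ᵀV⋆` and stacked matrices `W = [U; V]`, `W⋆ = [U⋆; V⋆]`. -/
theorem stmt14 {n₁ n₂ r : ℕ}
    (Ustar : Matrix (Fin n₁) (Fin r) ℝ) (Vstar : Matrix (Fin n₂) (Fin r) ℝ)
    (hbal : Ustarᵀ * Ustar = Vstarᵀ * Vstar) :
    ∀ (U : Matrix (Fin n₁) (Fin r) ℝ) (V : Matrix (Fin n₂) (Fin r) ℝ),
      (frobNorm (Ustar * Vstarᵀ - U * Vᵀ)) ^ 2 +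
          (1 / 4) * (frobNorm (Uᵀ * U - Vᵀ * V)) ^ 2 =
        (1 / 4) * (frobNorm (Matrix.fromRows U V * (Matrix.fromRows U V)ᵀ -
            Matrix.fromRows Ustar Vstar * (Matrix.fromRows Ustar Vstar)ᵀ)) ^ 2 +
          (1 / 2) * (frobNorm (Uᵀ * Ustar - Vᵀ * Vstar)) ^ 2 ∧
      (1 / 4) * (frobNorm (Matrix.fromRows U V * (Matrix.fromRows U V)ᵀ -
            Matrix.fromRows Ustar Vstar * (Matrix.fromRows Ustar Vstar)ᵀ)) ^ 2 ≤
        (frobNorm (Ustar * Vstarᵀ - U * Vᵀ)) ^ 2 +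
          (1 / 4) * (frobNorm (Uᵀ * U - Vᵀ * V)) ^ 2 := by
  intro U V
  set W : Matrix (Fin n₁ ⊕ Fin n₂) (Fin r) ℝ := Matrix.fromRows U V with hW
  set Ws : Matrix (Fin n₁ ⊕ Fin n₂) (Fin r) ℝ := Matrix.fromRows Ustar Vstar with hWs
  have hWW : Wᵀ * W = Uᵀ * U + Vᵀ * V := by
    rw [hW, Matrix.transpose_fromRows, Matrix.fromCols_mul_fromRows]
  have hWWs : Wᵀ * Ws = Uᵀ * Ustar + Vᵀ * Vstar := by
    rw [hW, hWs, Matrix.transpose_fromRows, Matrix.fromCols_mul_fromRows]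
  have hWsW : Wsᵀ * W = Ustarᵀ * U + Vstarᵀ * V := by
    rw [hW, hWs, Matrix.transpose_fromRows, Matrix.fromCols_mul_fromRows]
  have hWsWs : Wsᵀ * Ws = Ustarᵀ * Ustar + Ustarᵀ * Ustar := by
    rw [hWs, Matrix.transpose_fromRows, Matrix.fromCols_mul_fromRows, hbal]
  have E1 : (frobNorm (Ustar * Vstarᵀ - U * Vᵀ)) ^ 2
        = Matrix.trace (Uᵀ * U * (Vᵀ * V))
          - 2 * Matrix.trace (Uᵀ * Ustar * (Vstarᵀ * V))
          + Matrix.trace (Ustarᵀ * Ustar * (Ustarᵀ * Ustar)) := by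
    rw [fnsq]
    simp only [Matrix.transpose_sub, Matrix.transpose_mul, Matrix.transpose_transpose,
      Matrix.sub_mul, Matrix.mul_sub, Matrix.trace_sub]
    rw [trr Vstar Ustarᵀ Ustar Vstarᵀ, Matrix.trace_mul_comm (Ustarᵀ * Ustar), ← hbal,
        trr V Uᵀ U Vᵀ,
        trr Vstar Ustarᵀ U Vᵀ, trt Ustarᵀ U Vᵀ Vstar, Matrix.transpose_transpose,
          Matrix.transpose_transpose, trr Vstarᵀ V Uᵀ Ustar,
        trr V Uᵀ Ustar Vstarᵀ]
    ring
  have E2 : (frobNorm (Uᵀ * U - Vᵀ * V)) ^ 2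
        = Matrix.trace (Uᵀ * U * (Uᵀ * U)) - 2 * Matrix.trace (Uᵀ * U * (Vᵀ * V))
          + Matrix.trace (Vᵀ * V * (Vᵀ * V)) := by
    rw [fnsq]
    simp only [Matrix.transpose_sub, Matrix.transpose_mul, Matrix.transpose_transpose,
      Matrix.sub_mul, Matrix.mul_sub, Matrix.trace_sub]
    rw [trr Vᵀ V Uᵀ U, trr V Uᵀ U Vᵀ]
    ring
  have E4 : (frobNorm (Uᵀ * Ustar - Vᵀ * Vstar)) ^ 2
        = Matrix.trace (Ustarᵀ * U * (Uᵀ * Ustar))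
          - 2 * Matrix.trace (Uᵀ * Ustar * (Vstarᵀ * V))
          + Matrix.trace (Vstarᵀ * V * (Vᵀ * Vstar)) := by
    rw [fnsq]
    simp only [Matrix.transpose_sub, Matrix.transpose_mul, Matrix.transpose_transpose,
      Matrix.sub_mul, Matrix.mul_sub, Matrix.trace_sub]
    rw [trt Ustarᵀ U Vᵀ Vstar, Matrix.transpose_transpose, Matrix.transpose_transpose,
        trr Vstarᵀ V Uᵀ Ustar, trr V Uᵀ Ustar Vstarᵀ]
    ring
  have hb2 : Matrix.trace (Vᵀ * Vstar * (Ustarᵀ * U))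
      = Matrix.trace (Uᵀ * Ustar * (Vstarᵀ * V)) := by
    rw [trr Vᵀ Vstar Ustarᵀ U, trr Vstar Ustarᵀ U Vᵀ, trt Ustarᵀ U Vᵀ Vstar,
        Matrix.transpose_transpose, Matrix.transpose_transpose,
        trr Vstarᵀ V Uᵀ Ustar, trr V Uᵀ Ustar Vstarᵀ]
  have hp2 : Matrix.trace (Uᵀ * Ustar * (Ustarᵀ * U))
      = Matrix.trace (Ustarᵀ * U * (Uᵀ * Ustar)) := by
    rw [trr Uᵀ Ustar Ustarᵀ U, trr Ustar Ustarᵀ U Uᵀ]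
  have hq2 : Matrix.trace (Vᵀ * Vstar * (Vstarᵀ * V))
      = Matrix.trace (Vstarᵀ * V * (Vᵀ * Vstar)) := by
    rw [trr Vᵀ Vstar Vstarᵀ V, trr Vstar Vstarᵀ V Vᵀ]
  have E3 : (frobNorm (W * Wᵀ - Ws * Wsᵀ)) ^ 2
        = (Matrix.trace (Uᵀ * U * (Uᵀ * U)) + 2 * Matrix.trace (Uᵀ * U * (Vᵀ * V))
            + Matrix.trace (Vᵀ * V * (Vᵀ * V)))
          - 2 * (Matrix.trace (Ustarᵀ * U * (Uᵀ * Ustar))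
            + Matrix.trace (Vstarᵀ * V * (Vᵀ * Vstar))
            + 2 * Matrix.trace (Uᵀ * Ustar * (Vstarᵀ * V)))
          + 4 * Matrix.trace (Ustarᵀ * Ustar * (Ustarᵀ * Ustar)) := by
    rw [fnsq]
    simp only [Matrix.transpose_sub, Matrix.transpose_mul, Matrix.transpose_transpose,
      Matrix.sub_mul, Matrix.mul_sub, Matrix.trace_sub]
    rw [trr Ws Wsᵀ W Wᵀ, trr Wsᵀ W Wᵀ Ws]
    rw [trr W Wᵀ W Wᵀ, hWW]
    rw [trr W Wᵀ Ws Wsᵀ, hWWs, hWsW]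
    rw [trr Ws Wsᵀ Ws Wsᵀ, hWsWs]
    simp only [Matrix.add_mul, Matrix.mul_add, Matrix.trace_add]
    rw [Matrix.trace_mul_comm (Vᵀ * V) (Uᵀ * U)]
    rw [hb2, hp2, hq2]
    ring
  constructor
  · rw [E1, E2, E3, E4]; ring
  · have h4 : (0:ℝ) ≤ (frobNorm (Uᵀ * Ustar - Vᵀ * Vstar)) ^ 2 := sq_nonneg _
    rw [E1, E2, E3]
    rw [E4] at h4
    linarith
end
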